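/- arXiv:2102.10104 — 2 statements merged into one kernel-verified Lean document; each statement's English description precedes it below -/
import Mathlib

section
/- Let M be a memory skeleton and 𝔄 a class of initialized arenas closed by subarena and by split. Then the class of all initialized arenas in 𝔄 that are covered by M is itself closed by subarena and by split. -/
open MeasureTheory (Measure IsProbabilityMeasure)
open scoped ENNReal
open scoped Classical

namespace StochGames

/-! ### Infinite color sequences with the cylinder σ-algebra -/

def ColSeq (C : Type*) := ℕ → C

variable {C : Type*}

/-- The cylinder of a finite word of colors. -/
def wordCyl (u : List C) : Set (ColSeq C) :=
  {w | ∀ i : Fin u.length, w i.1 = u.get i}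

/-- The σ-algebra `F` on `C^ω` generated by cylinders. -/
instance instColSeqMS : MeasurableSpace (ColSeq C) :=
  MeasurableSpace.generateFrom {E | ∃ u : List C, E = wordCyl u}

/-- Prepending a finite word to an infinite word. -/
def prependWord (u : List C) (w : ColSeq C) : ColSeq C :=
  fun i => if h : i < u.length then u.get ⟨i, h⟩ else w (i - u.length)

/-- The shifted measure `wμ`, with `wμ(E) = μ {w' | w·w' ∈ E}`. -/
noncomputable def shiftMeasure (u : List C) (μ : Measure (ColSeq C)) : Measure (ColSeq C) :=
  μ.map (prependWord u)

/-- A preference relation: a total preorder on `Dist(C^ω, F)`. -/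
structure PrefRel (C : Type*) where
  le : Measure (ColSeq C) → Measure (ColSeq C) → Prop
  refl : ∀ μ : Measure (ColSeq C), IsProbabilityMeasure μ → le μ μ
  trans : ∀ μ ν ξ : Measure (ColSeq C), IsProbabilityMeasure μ → IsProbabilityMeasure ν →
      IsProbabilityMeasure ξ → le μ ν → le ν ξ → le μ ξ
  total : ∀ μ ν : Measure (ColSeq C), IsProbabilityMeasure μ → IsProbabilityMeasure ν →
      le μ ν ∨ le ν μ

/-! ### Memory skeletons -/

structure MemorySkeleton (C : Type*) where
  M : Type
  init : M
  upd : M → C → M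
  reach_fin : ∀ B : Set C, B.Finite →
      Set.Finite {m : M | ∃ u : List C, (∀ c ∈ u, c ∈ B) ∧ u.foldl upd init = m}

namespace MemorySkeleton

/-- Extension `α̂_upd` of the update function to finite words. -/
def run (sk : MemorySkeleton C) (m : sk.M) (u : List C) : sk.M := u.foldl sk.upd m

/-- `W_{m → m'}`: the words read from `m` up to `m'`. -/
def lang (sk : MemorySkeleton C) (m m' : sk.M) : Set (List C) := {u | sk.run m u = m'}

/-- Product of two memory skeletons. -/
def prod (sk1 sk2 : MemorySkeleton C) : MemorySkeleton C where
  M := sk1.M × sk2.M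
  init := (sk1.init, sk2.init)
  upd := fun m c => (sk1.upd m.1 c, sk2.upd m.2 c)
  reach_fin := by
    intro B hB
    have key : ∀ (u : List C) (m : sk1.M × sk2.M),
        u.foldl (fun m c => (sk1.upd m.1 c, sk2.upd m.2 c)) m =
          (u.foldl sk1.upd m.1, u.foldl sk2.upd m.2) := by
      intro u
      induction u with
      | nil => intro m; rfl
      | cons c rest ih =>
          intro m
          simp only [List.foldl_cons]
          exact ih (sk1.upd m.1 c, sk2.upd m.2 c)
    refine Set.Finite.subset ((sk1.reach_fin B hB).prod (sk2.reach_fin B hB)) ?_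
    rintro ⟨m1, m2⟩ ⟨u, hu, hrun⟩
    rw [key] at hrun
    exact ⟨⟨u, hu, congrArg Prod.fst hrun⟩, ⟨u, hu, congrArg Prod.snd hrun⟩⟩

end MemorySkeleton



/-! ### Arenas -/

/-- A two-player stochastic turn-based arena. `owner s = true` means player 1 controls `s`. -/
structure Arena (C : Type*) where
  S : Type
  A : Type
  [finS : Finite S]
  [finA : Finite A]
  [decS : DecidableEq S]
  owner : S → Bool
  tr : S → A → Option (PMF S)
  col : S → A → C
  nonblocking : ∀ s : S, ∃ a : A, (tr s a).isSome

attribute [instance] Arena.finS Arena.finA Arena.decS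

namespace Arena

/-- `a` is available in `s`. -/
def avail (Ar : Arena C) (s : Ar.S) (a : Ar.A) : Prop := (Ar.tr s a).isSome

/-- Transition probability `δ(s, a)(s')` (`0` if `a` is unavailable). -/
noncomputable def prob (Ar : Arena C) (s : Ar.S) (a : Ar.A) (s' : Ar.S) : ℝ≥0∞ :=
  match Ar.tr s a with
  | none => 0
  | some p => p s'

/-- Colors along a sequence of steps starting from a given state. -/
def colsFrom (Ar : Arena C) : Ar.S → List (Ar.A × Ar.S) → List C
  | _, [] => []
  | s, (a, s') :: rest => Ar.col s a :: Ar.colsFrom s' rest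

/-- Validity of a sequence of steps from a state: each transition has positive probability. -/
def ValidSteps (Ar : Arena C) : Ar.S → List (Ar.A × Ar.S) → Prop
  | _, [] => True
  | s, (a, s') :: rest => 0 < Ar.prob s a s' ∧ Ar.ValidSteps s' rest

/-- An arena is deterministic if every defined transition is a Dirac distribution. -/
def IsDeterministic (Ar : Arena C) : Prop :=
  ∀ s a p, Ar.tr s a = some p → ∃ s', p = PMF.pure s'

/-- One-player arena of the player `pl`: the other player has exactly one available action
everywhere. -/
def IsOnePlayer (Ar : Arena C) (pl : Bool) : Prop :=
  ∀ s : Ar.S, Ar.owner s = !pl → ∃! a : Ar.A, Ar.avail s a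

/-- The (finite) set of colors appearing in an arena. -/
def colorSet (Ar : Arena C) : Set C := Set.range fun p : Ar.S × Ar.A => Ar.col p.1 p.2

end Arena

/-! ### Histories -/

/-- A history `s₀ a₁ s₁ … aₙ sₙ` (validity is a separate predicate). -/
structure Hist (Ar : Arena C) where
  first : Ar.S
  steps : List (Ar.A × Ar.S)

namespace Hist

variable {Ar : Arena C}

/-- `out(ρ)`: the last state of a history. -/
def out (ρ : Hist Ar) : Ar.S := (ρ.steps.map Prod.snd).getLastD ρ.first

/-- `ĉol(ρ)`: the finite word of colors along a history. -/
def cols (ρ : Hist Ar) : List C := Ar.colsFrom ρ.first ρ.steps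

def Valid (ρ : Hist Ar) : Prop := Ar.ValidSteps ρ.first ρ.steps

/-- `ρ ∈ Hists(A, I)`. -/
def Starts (ρ : Hist Ar) (I : Set Ar.S) : Prop := ρ.Valid ∧ ρ.first ∈ I

/-- `ρ ∈ Hists_i(A, I)` where `i` is the player `pl`. -/
def ForPlayer (ρ : Hist Ar) (I : Set Ar.S) (pl : Bool) : Prop :=
  ρ.Starts I ∧ Ar.owner ρ.out = pl

/-- The prefix of a history keeping its first `n` steps. -/
def take (ρ : Hist Ar) (n : ℕ) : Hist Ar := ⟨ρ.first, ρ.steps.take n⟩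

/-- The `i`-th state `sᵢ` along a history. -/
def stateAt (ρ : Hist Ar) (i : ℕ) : Ar.S := ((ρ.steps.map Prod.snd).take i).getLastD ρ.first

end Hist

/-! ### Strategies -/

/-- A strategy: a map from histories to distributions over actions.  The support condition
and the restriction to the relevant histories are separate predicates. -/
def Strategy (Ar : Arena C) := Hist Ar → PMF Ar.A

namespace Strategy

variable {Ar : Arena C}

/-- The support condition for a strategy of player `pl` on `(Ar, I)`. -/
def ProperFor (σ : Strategy Ar) (I : Set Ar.S) (pl : Bool) : Prop :=
  ∀ ρ : Hist Ar, ρ.ForPlayer I pl → ∀ a, σ ρ a ≠ 0 → Ar.avail ρ.out a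

/-- Pure strategy (on the relevant histories). -/
def PureFor (σ : Strategy Ar) (I : Set Ar.S) (pl : Bool) : Prop :=
  ∀ ρ : Hist Ar, ρ.ForPlayer I pl → ∃ a, σ ρ = PMF.pure a

/-- Memoryless strategy (on the relevant histories). -/
def MemlessFor (σ : Strategy Ar) (I : Set Ar.S) (pl : Bool) : Prop :=
  ∀ ρ ρ' : Hist Ar, ρ.ForPlayer I pl → ρ'.ForPlayer I pl → ρ.out = ρ'.out → σ ρ = σ ρ'

/-- Strategy based on the memory skeleton `sk`, i.e. encoded by some Mealy machine
`(sk, nxt)`. -/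
def BasedOnFor (σ : Strategy Ar) (sk : MemorySkeleton C) (I : Set Ar.S) (pl : Bool) : Prop :=
  ∃ nxt : Ar.S → sk.M → PMF Ar.A,
    ∀ ρ : Hist Ar, ρ.ForPlayer I pl → σ ρ = nxt ρ.out (sk.run sk.init ρ.cols)

/-- Finite-memory strategy. -/
def FMFor (σ : Strategy Ar) (I : Set Ar.S) (pl : Bool) : Prop :=
  ∃ sk : MemorySkeleton C, σ.BasedOnFor sk I pl

/-- The shifted strategy `σ ↾ ρ`. -/
noncomputable def shift (σ : Strategy Ar) (ρ : Hist Ar) : Strategy Ar :=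
  fun ρ' => if ρ'.first = ρ.out then σ ⟨ρ.first, ρ.steps ++ ρ'.steps⟩ else σ ρ'

end Strategy

/-- The four types of strategies. -/
inductive StratType | PFM | P | RFM | G

/-- Membership of a strategy (of player `pl`, on initial states `I`) in a strategy type. -/
def StratType.Mem {Ar : Arena C} (X : StratType) (σ : Strategy Ar) (I : Set Ar.S)
    (pl : Bool) : Prop :=
  σ.ProperFor I pl ∧
    match X with
    | .PFM => σ.PureFor I pl ∧ σ.FMFor I pl
    | .P => σ.PureFor I pl
    | .RFM => σ.FMFor I pl
    | .G => True

/-! ### The probability measure on plays -/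

/-- A play `s₀ a₁ s₁ a₂ s₂ …` (validity is irrelevant for measure-zero sets). -/
structure Play (Ar : Arena C) where
  st : ℕ → Ar.S
  ac : ℕ → Ar.A

/-- The cylinder of a history: all plays extending it. -/
def cylSet {Ar : Arena C} (ρ : Hist Ar) : Set (Play Ar) :=
  {p | p.st 0 = ρ.first ∧ ∀ i : Fin ρ.steps.length,
      p.ac i.1 = (ρ.steps.get i).1 ∧ p.st (i.1 + 1) = (ρ.steps.get i).2}

/-- The σ-algebra on plays generated by cylinders. -/
instance instPlayMS {Ar : Arena C} : MeasurableSpace (Play Ar) :=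
  MeasurableSpace.generateFrom {E | ∃ ρ : Hist Ar, E = cylSet ρ}

/-- `ĉol` on plays: the infinite sequence of colors. -/
def colsω {Ar : Arena C} (p : Play Ar) : ColSeq C := fun i => Ar.col (p.st i) (p.ac i)

/-- The weight of one step of a history, `σ_{i_j}(prefix)(a) · δ(out(prefix), a)(s')`. -/
noncomputable def stepWeight (Ar : Arena C) (σ1 σ2 : Strategy Ar) (pre : Hist Ar)
    (a : Ar.A) (s' : Ar.S) : ℝ≥0∞ :=
  (if Ar.owner pre.out then σ1 pre a else σ2 pre a) * Ar.prob pre.out a s'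

/-- Auxiliary product of step weights. -/
noncomputable def histProbAux (Ar : Arena C) (σ1 σ2 : Strategy Ar) (first : Ar.S) :
    List (Ar.A × Ar.S) → List (Ar.A × Ar.S) → ℝ≥0∞
  | _, [] => 1
  | done, (a, s') :: rest =>
      stepWeight Ar σ1 σ2 ⟨first, done⟩ a s' *
        histProbAux Ar σ1 σ2 first (done ++ [(a, s')]) rest

/-- The probability `∏_{j=1}^n σ_{i_j}(s₀a₁…s_{j−1})(a_j) · δ(s_{j−1}, a_j)(s_j)` of a
history under a pair of strategies. -/
noncomputable def histProb (Ar : Arena C) (σ1 σ2 : Strategy Ar) (ρ : Hist Ar) : ℝ≥0∞ :=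
  histProbAux Ar σ1 σ2 ρ.first [] ρ.steps

/-- Specification of the measure `Pr^{σ1,σ2}_{Ar,s}` on plays: the unique probability
measure giving each cylinder of a history from `s` the prescribed product probability
(and giving cylinders of histories not starting at `s` probability `0`). -/
def IsPlayMeasure (Ar : Arena C) (σ1 σ2 : Strategy Ar) (s : Ar.S)
    (μ : Measure (Play Ar)) : Prop :=
  IsProbabilityMeasure μ ∧
    (∀ ρ : Hist Ar, ρ.first = s → μ (cylSet ρ) = histProb Ar σ1 σ2 ρ) ∧
    (∀ ρ : Hist Ar, ρ.first ≠ s → μ (cylSet ρ) = 0)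

/-- `Pr^{σ1,σ2}_{Ar,s}`, the measure on plays induced by two strategies from `s`
(obtained from its defining property by choice). -/
noncomputable def playMeasure (Ar : Arena C) (σ1 σ2 : Strategy Ar) (s : Ar.S) :
    Measure (Play Ar) :=
  @Classical.epsilon _ ⟨0⟩ (IsPlayMeasure Ar σ1 σ2 s)

/-- `Pc^{σ1,σ2}_{Ar,s}`, the pushforward of `Pr^{σ1,σ2}_{Ar,s}` under `ĉol`. -/
noncomputable def Pc (Ar : Arena C) (σ1 σ2 : Strategy Ar) (s : Ar.S) :
    Measure (ColSeq C) :=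
  (playMeasure Ar σ1 σ2 s).map colsω

/-- A canonical strategy for the passive player in a one-player arena
(it plays the unique available action wherever the choice is forced). -/
noncomputable def defaultStrat (Ar : Arena C) : Strategy Ar :=
  fun ρ => PMF.pure (Ar.nonblocking ρ.out).choose

/-- `Pc^{σ1}_{Ar,s}` in a one-player arena of player 1. -/
noncomputable def Pc1 (Ar : Arena C) (σ1 : Strategy Ar) (s : Ar.S) : Measure (ColSeq C) :=
  Pc Ar σ1 (defaultStrat Ar) s

/-! ### Optimality, Nash equilibria, subgame perfection -/

/-- `UCol^X_⊑(Ar, s, σ1)`. -/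
def UColSet (le : Measure (ColSeq C) → Measure (ColSeq C) → Prop) (Ar : Arena C)
    (Xt : StratType) (s : Ar.S) (σ1 : Strategy Ar) : Set (Measure (ColSeq C)) :=
  {μ | IsProbabilityMeasure μ ∧ ∃ σ2 : Strategy Ar, Xt.Mem σ2 {s} false ∧ le (Pc Ar σ1 σ2 s) μ}

/-- `DCol^X_⊑(Ar, s, σ2)`. -/
def DColSet (le : Measure (ColSeq C) → Measure (ColSeq C) → Prop) (Ar : Arena C)
    (Xt : StratType) (s : Ar.S) (σ2 : Strategy Ar) : Set (Measure (ColSeq C)) :=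
  {μ | IsProbabilityMeasure μ ∧ ∃ σ1 : Strategy Ar, Xt.Mem σ1 {s} true ∧ le μ (Pc Ar σ1 σ2 s)}

/-- `X`-optimality for player 1 in the initialized game `(Ar, I, le)`. -/
def OptimalFor1 (le : Measure (ColSeq C) → Measure (ColSeq C) → Prop) (Ar : Arena C)
    (I : Set Ar.S) (Xt : StratType) (σ1 : Strategy Ar) : Prop :=
  Xt.Mem σ1 I true ∧
    ∀ s ∈ I, ∀ σ1' : Strategy Ar, Xt.Mem σ1' I true →
      UColSet le Ar Xt s σ1 ⊆ UColSet le Ar Xt s σ1'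

/-- `X`-optimality for player 2 in the initialized game `(Ar, I, le)`. -/
def OptimalFor2 (le : Measure (ColSeq C) → Measure (ColSeq C) → Prop) (Ar : Arena C)
    (I : Set Ar.S) (Xt : StratType) (σ2 : Strategy Ar) : Prop :=
  Xt.Mem σ2 I false ∧
    ∀ s ∈ I, ∀ σ2' : Strategy Ar, Xt.Mem σ2' I false →
      DColSet le Ar Xt s σ2 ⊆ DColSet le Ar Xt s σ2'

/-- `X`-optimality for the player `pl`. -/
def OptimalFor (pl : Bool) (le : Measure (ColSeq C) → Measure (ColSeq C) → Prop)
    (Ar : Arena C) (I : Set Ar.S) (Xt : StratType) (σ : Strategy Ar) : Prop :=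
  match pl with
  | true => OptimalFor1 le Ar I Xt σ
  | false => OptimalFor2 le Ar I Xt σ

/-- `X`-Nash equilibrium in the initialized game `(Ar, I, le)`. -/
def IsNE' (le : Measure (ColSeq C) → Measure (ColSeq C) → Prop) (Ar : Arena C)
    (I : Set Ar.S) (Xt : StratType) (σ1 σ2 : Strategy Ar) : Prop :=
  Xt.Mem σ1 I true ∧ Xt.Mem σ2 I false ∧
    ∀ s ∈ I,
      (∀ σ1' : Strategy Ar, Xt.Mem σ1' I true → le (Pc Ar σ1' σ2 s) (Pc Ar σ1 σ2 s)) ∧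
      (∀ σ2' : Strategy Ar, Xt.Mem σ2' I false → le (Pc Ar σ1 σ2 s) (Pc Ar σ1 σ2' s))

/-- The shifted relation `⊑_w`. -/
def shiftLE (pref : PrefRel C) (u : List C) :
    Measure (ColSeq C) → Measure (ColSeq C) → Prop :=
  fun μ ν => pref.le (shiftMeasure u μ) (shiftMeasure u ν)

/-- `X`-subgame perfection for player 1. -/
def SPFor1 (pref : PrefRel C) (Ar : Arena C) (I : Set Ar.S) (Xt : StratType)
    (σ1 : Strategy Ar) : Prop :=
  ∀ ρ : Hist Ar, ρ.Starts I →
    OptimalFor1 (shiftLE pref ρ.cols) Ar {ρ.out} Xt (σ1.shift ρ)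

/-- `X`-subgame perfection for player 2. -/
def SPFor2 (pref : PrefRel C) (Ar : Arena C) (I : Set Ar.S) (Xt : StratType)
    (σ2 : Strategy Ar) : Prop :=
  ∀ ρ : Hist Ar, ρ.Starts I →
    OptimalFor2 (shiftLE pref ρ.cols) Ar {ρ.out} Xt (σ2.shift ρ)

/-- `X`-subgame perfect equilibrium. -/
def IsSPE (pref : PrefRel C) (Ar : Arena C) (I : Set Ar.S) (Xt : StratType)
    (σ1 σ2 : Strategy Ar) : Prop :=
  ∀ ρ : Hist Ar, ρ.Starts I →
    IsNE' (shiftLE pref ρ.cols) Ar {ρ.out} Xt (σ1.shift ρ) (σ2.shift ρ)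

/-! ### Initialized arenas and constructions on them -/

/-- An initialized arena. -/
structure InitArena (C : Type*) where
  Ar : Arena C
  I : Set Ar.S
  ne : I.Nonempty

/-- Coverability of an initialized arena by a memory skeleton. -/
def Covered (X : InitArena C) (sk : MemorySkeleton C) : Prop :=
  ∃ φ : X.Ar.S → sk.M, (∀ s ∈ X.I, φ s = sk.init) ∧
    ∀ s a s', 0 < X.Ar.prob s a s' → sk.upd (φ s) (X.Ar.col s a) = φ s'

/-- Isomorphism of initialized arenas. -/
def Isomorphic (X Y : InitArena C) : Prop :=
  ∃ (e : X.Ar.S ≃ Y.Ar.S) (f : X.Ar.S → X.Ar.A → Y.Ar.A),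
    (∀ s, Y.Ar.owner (e s) = X.Ar.owner s) ∧
    (∀ s, s ∈ X.I ↔ e s ∈ Y.I) ∧
    (∀ s, Set.BijOn (f s) {a | X.Ar.avail s a} {b | Y.Ar.avail (e s) b}) ∧
    (∀ s a, X.Ar.avail s a → ∀ s', Y.Ar.prob (e s) (f s a) (e s') = X.Ar.prob s a s') ∧
    (∀ s a, X.Ar.avail s a → Y.Ar.col (e s) (f s a) = X.Ar.col s a)

/-! ### Product of an initialized arena with a memory skeleton -/

/-- Reachable state/memory pairs in the product. -/
inductive ProdReach (Ar : Arena C) (I : Set Ar.S) (sk : MemorySkeleton C) :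
    Ar.S × sk.M → Prop
  | base : ∀ s ∈ I, ProdReach Ar I sk (s, sk.init)
  | step : ∀ s m a s', ProdReach Ar I sk (s, m) → 0 < Ar.prob s a s' →
      ProdReach Ar I sk (s', sk.upd m (Ar.col s a))

lemma prodReach_snd {Ar : Arena C} {I : Set Ar.S} {sk : MemorySkeleton C} :
    ∀ {p : Ar.S × sk.M}, ProdReach Ar I sk p →
      ∃ u : List C, (∀ c ∈ u, c ∈ Ar.colorSet) ∧ u.foldl sk.upd sk.init = p.2 := by
  intro p h
  induction h with
  | base s hs => exact ⟨[], by simp⟩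
  | step s m a s' _ _ ih =>
      obtain ⟨u, hu, hr⟩ := ih
      refine ⟨u ++ [Ar.col s a], ?_, ?_⟩
      · intro c hc
        rcases List.mem_append.1 hc with h' | h'
        · exact hu c h'
        · simp only [List.mem_singleton] at h'
          subst h'
          exact ⟨(s, a), rfl⟩
      · simp [List.foldl_append, hr]

lemma prodReach_finite (Ar : Arena C) (I : Set Ar.S) (sk : MemorySkeleton C) :
    Set.Finite {p : Ar.S × sk.M | ProdReach Ar I sk p} := by
  have hB : Ar.colorSet.Finite := Set.finite_range _
  refine Set.Finite.subset ((Set.finite_univ (α := Ar.S)).prod (sk.reach_fin _ hB)) ?_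
  rintro ⟨s, m⟩ hp
  exact ⟨Set.mem_univ s, prodReach_snd hp⟩

/-- The product initialized arena `(A, S_init) ⋉ M`. -/
noncomputable def prodArena (X : InitArena C) (sk : MemorySkeleton C) : InitArena C where
  Ar :=
    { S := {p : X.Ar.S × sk.M // ProdReach X.Ar X.I sk p}
      A := X.Ar.A
      finS := (prodReach_finite X.Ar X.I sk).to_subtype
      finA := X.Ar.finA
      decS := Classical.decEq _
      owner := fun q => X.Ar.owner q.1.1
      tr := fun q a => (X.Ar.tr q.1.1 a).map fun p => p.map fun s' =>
        if h : ProdReach X.Ar X.I sk (s', sk.upd q.1.2 (X.Ar.col q.1.1 a)) then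
          ⟨(s', sk.upd q.1.2 (X.Ar.col q.1.1 a)), h⟩
        else q
      col := fun q a => X.Ar.col q.1.1 a
      nonblocking := by
        intro q
        obtain ⟨a, ha⟩ := X.Ar.nonblocking q.1.1
        refine ⟨a, ?_⟩
        cases htr : X.Ar.tr q.1.1 a with
        | none => rw [htr] at ha; simp at ha
        | some p => simp [htr] }
  I := {q | q.1.1 ∈ X.I ∧ q.1.2 = sk.init}
  ne := by
    obtain ⟨s, hs⟩ := X.ne
    exact ⟨⟨(s, sk.init), ProdReach.base s hs⟩, hs, rfl⟩

/-- Closure of a class of initialized arenas under product with a memory skeleton. -/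
def ClosedByProduct (𝔄 : Set (InitArena C)) (sk : MemorySkeleton C) : Prop :=
  ∀ X ∈ 𝔄, prodArena X sk ∈ 𝔄

/-! ### Subarenas -/

/-- Restriction of an arena to a set of kept actions. -/
noncomputable def restrictArena (Ar : Arena C) (keep : Ar.S → Set Ar.A)
    (hk : ∀ s, ∃ a ∈ keep s, Ar.avail s a) : Arena C where
  S := Ar.S
  A := Ar.A
  owner := Ar.owner
  tr := fun s a => if a ∈ keep s then Ar.tr s a else none
  col := Ar.col
  nonblocking := by
    intro s
    obtain ⟨a, h1, h2⟩ := hk s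
    exact ⟨a, by simp only [if_pos h1]; exact h2⟩

/-- Closure under initialized subarenas. -/
def ClosedBySubarena (𝔄 : Set (InitArena C)) : Prop :=
  ∀ X ∈ 𝔄, ∀ (keep : X.Ar.S → Set X.Ar.A) (hk : ∀ s, ∃ a ∈ keep s, X.Ar.avail s a),
    (⟨restrictArena X.Ar keep hk, X.I, X.ne⟩ : InitArena C) ∈ 𝔄

/-! ### Splits -/

/-- Renaming of states for copies of the arena in the split on `t`:
`t` becomes the merged state (represented by `none`) and any other state `s`
becomes the copy `s^lab` (represented by `some (lab, s)`). -/
def reName (Ar : Arena C) (t : Ar.S) (lab : Ar.A) (s : Ar.S) : Option (Ar.A × Ar.S) :=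
  if s = t then none else some (lab, s)

/-- Forgetting the copy labels of the split. -/
def splitBase (Ar : Arena C) (t : Ar.S) : Option (Ar.A × Ar.S) → Ar.S
  | none => t
  | some (_, s) => s

/-- The split of an arena on a state `t`. -/
noncomputable def splitArena (Ar : Arena C) (t : Ar.S) : Arena C where
  S := Option (Ar.A × Ar.S)
  A := Ar.A
  finS := Finite.of_equiv _ (Equiv.optionEquivSumPUnit.{0, 0} (Ar.A × Ar.S)).symm
  finA := Ar.finA
  decS := Classical.decEq _
  owner := fun q => Ar.owner (splitBase Ar t q)
  tr := fun q b =>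
    match q with
    | none => (Ar.tr t b).map fun p => p.map (reName Ar t b)
    | some (lab, s) => (Ar.tr s b).map fun p => p.map (reName Ar t lab)
  col := fun q b => Ar.col (splitBase Ar t q) b
  nonblocking := by
    rintro (_ | ⟨lab, s⟩)
    · obtain ⟨b, hb⟩ := Ar.nonblocking t
      refine ⟨b, ?_⟩
      cases htr : Ar.tr t b with
      | none => rw [htr] at hb; simp at hb
      | some p => simp [htr]
    · obtain ⟨b, hb⟩ := Ar.nonblocking s
      refine ⟨b, ?_⟩
      cases htr : Ar.tr s b with
      | none => rw [htr] at hb; simp at hb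
      | some p => simp [htr]

/-- Initial states of the split (union over `a ∈ Act(t)` of the copies of `S_init`). -/
def splitInit (X : InitArena C) (t : X.Ar.S) : Set (Option (X.Ar.A × X.Ar.S)) :=
  {q | ∃ a s, X.Ar.avail t a ∧ s ∈ X.I ∧ q = reName X.Ar t a s}

/-- Initial states `S_init^a` of the copy `a` within the split. -/
def splitInitA (X : InitArena C) (t : X.Ar.S) (a : X.Ar.A) :
    Set (Option (X.Ar.A × X.Ar.S)) :=
  {q | ∃ s ∈ X.I, q = reName X.Ar t a s}

/-- The split of an initialized arena on a state `t`. -/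
noncomputable def splitInitArena (X : InitArena C) (t : X.Ar.S) : InitArena C where
  Ar := splitArena X.Ar t
  I := splitInit X t
  ne := by
    obtain ⟨s, hs⟩ := X.ne
    obtain ⟨a, ha⟩ := X.Ar.nonblocking t
    exact ⟨reName X.Ar t a s, a, s, ha, hs, rfl⟩

/-- Closure under splits. -/
def ClosedBySplit (𝔄 : Set (InitArena C)) : Prop :=
  ∀ X ∈ 𝔄, ∀ t : X.Ar.S, splitInitArena X t ∈ 𝔄

/-! ### Prefix extensions -/

/-- The prefix-extension `A_{w ⇝ s₀}` of an initialized arena: a fresh chain of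
player-1 states reading the word `w` and leading to `s₀` is added, and the first
state of the chain becomes an additional initial state. -/
noncomputable def prefixExtArena (X : InitArena C) (w : List C) (s0 : X.Ar.S) :
    InitArena C where
  Ar :=
    { S := X.Ar.S ⊕ Fin w.length
      A := X.Ar.A ⊕ Unit
      decS := Classical.decEq _
      owner := fun q =>
        match q with
        | Sum.inl u => X.Ar.owner u
        | Sum.inr _ => true
      tr := fun q b =>
        match q, b with
        | Sum.inl u, Sum.inl a => (X.Ar.tr u a).map fun p => p.map Sum.inl
        | Sum.inl _, Sum.inr _ => none
        | Sum.inr _, Sum.inl _ => none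
        | Sum.inr i, Sum.inr _ => some (PMF.pure
            (if h : (i : ℕ) + 1 < w.length then Sum.inr ⟨(i : ℕ) + 1, h⟩ else Sum.inl s0))
      col := fun q b =>
        match q, b with
        | Sum.inl u, Sum.inl a => X.Ar.col u a
        | Sum.inl u, Sum.inr _ => X.Ar.col u (X.Ar.nonblocking u).choose
        | Sum.inr i, _ => w.get i
      nonblocking := by
        rintro (u | i)
        · obtain ⟨a, ha⟩ := X.Ar.nonblocking u
          refine ⟨Sum.inl a, ?_⟩
          cases htr : X.Ar.tr u a with
          | none => rw [htr] at ha; simp at ha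
          | some p => simp [htr]
        · exact ⟨Sum.inr (), rfl⟩ }
  I := Sum.inl '' X.I ∪ {if h : 0 < w.length then Sum.inr ⟨0, h⟩ else Sum.inl s0}
  ne := ⟨_, Or.inr rfl⟩

/-- Closure under prefix-extensions. -/
def ClosedByPrefixExt (𝔄 : Set (InitArena C)) : Prop :=
  ∀ X ∈ 𝔄, ∀ (w : List C) (s0 : X.Ar.S), prefixExtArena X w s0 ∈ 𝔄

/-! ### Merging two arenas on a state -/

def mergeRen1 (A1 : Arena C) (s1 : A1.S) (A2 : Arena C) :
    A1.S → Option (A1.S ⊕ A2.S) :=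
  fun u => if u = s1 then none else some (Sum.inl u)

def mergeRen2 (A1 : Arena C) (A2 : Arena C) (s2 : A2.S) :
    A2.S → Option (A1.S ⊕ A2.S) :=
  fun u => if u = s2 then none else some (Sum.inr u)

/-- The merged arena `(A1, s1) ⊔ (A2, s2)`; the merged state `t` is `none`. -/
noncomputable def mergeArena (A1 : Arena C) (s1 : A1.S) (A2 : Arena C) (s2 : A2.S) :
    Arena C where
  S := Option (A1.S ⊕ A2.S)
  A := A1.A ⊕ A2.A
  finS := Finite.of_equiv _ (Equiv.optionEquivSumPUnit.{0, 0} (A1.S ⊕ A2.S)).symm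
  decS := Classical.decEq _
  owner := fun q =>
    match q with
    | none => A1.owner s1
    | some (Sum.inl u) => A1.owner u
    | some (Sum.inr u) => A2.owner u
  tr := fun q b =>
    match q, b with
    | none, Sum.inl a => (A1.tr s1 a).map fun p => p.map (mergeRen1 A1 s1 A2)
    | none, Sum.inr a => (A2.tr s2 a).map fun p => p.map (mergeRen2 A1 A2 s2)
    | some (Sum.inl u), Sum.inl a => (A1.tr u a).map fun p => p.map (mergeRen1 A1 s1 A2)
    | some (Sum.inl _), Sum.inr _ => none
    | some (Sum.inr u), Sum.inr a => (A2.tr u a).map fun p => p.map (mergeRen2 A1 A2 s2)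
    | some (Sum.inr _), Sum.inl _ => none
  col := fun q b =>
    match q, b with
    | none, Sum.inl a => A1.col s1 a
    | none, Sum.inr a => A2.col s2 a
    | some (Sum.inl u), Sum.inl a => A1.col u a
    | some (Sum.inl _), Sum.inr a => A2.col s2 a
    | some (Sum.inr u), Sum.inr a => A2.col u a
    | some (Sum.inr _), Sum.inl a => A1.col s1 a
  nonblocking := by
    rintro (_ | (u | u))
    · obtain ⟨a, ha⟩ := A1.nonblocking s1
      refine ⟨Sum.inl a, ?_⟩
      cases htr : A1.tr s1 a with
      | none => rw [htr] at ha; simp at ha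
      | some p => simp [htr]
    · obtain ⟨a, ha⟩ := A1.nonblocking u
      refine ⟨Sum.inl a, ?_⟩
      cases htr : A1.tr u a with
      | none => rw [htr] at ha; simp at ha
      | some p => simp [htr]
    · obtain ⟨a, ha⟩ := A2.nonblocking u
      refine ⟨Sum.inr a, ?_⟩
      cases htr : A2.tr u a with
      | none => rw [htr] at ha; simp at ha
      | some p => simp [htr]

/-! ### One-player classes, monotony and selectivity -/

/-- The kind of arenas considered: deterministic or stochastic. -/
inductive ArenaKind | det | stoch

/-- Membership in the class `D^Y_1` of one-player arenas of player 1,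
deterministic if `Y = det`, arbitrary (stochastic) if `Y = stoch`. -/
def InD1 (Y : ArenaKind) (Ar : Arena C) : Prop :=
  Ar.IsOnePlayer true ∧ (Y = ArenaKind.det → Ar.IsDeterministic)

/-- `[Ar]^X_s`: the distributions over color sequences induced by the strategies of
player 1 of type `X` in the one-player arena `(Ar, s)`. -/
def stratSet (Ar : Arena C) (Xt : StratType) (s : Ar.S) : Set (Measure (ColSeq C)) :=
  {μ | ∃ σ1 : Strategy Ar, Xt.Mem σ1 {s} true ∧ μ = Pc1 Ar σ1 s}

/-- `wΛ`: a set of measures shifted by a finite word. -/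
def shiftSet (u : List C) (Λ : Set (Measure (ColSeq C))) : Set (Measure (ColSeq C)) :=
  shiftMeasure u '' Λ

/-- `Λ1 ⊑ Λ2` for sets of distributions. -/
def prefSetLE (pref : PrefRel C) (Λ1 Λ2 : Set (Measure (ColSeq C))) : Prop :=
  ∀ μ1 ∈ Λ1, ∃ μ2 ∈ Λ2, pref.le μ1 μ2

/-- `X`-`Y`-`M`-monotony. -/
def MonotoneFor (pref : PrefRel C) (Xt : StratType) (Y : ArenaKind)
    (sk : MemorySkeleton C) : Prop :=
  ∀ m : sk.M, ∀ (A1 : Arena C) (s1 : A1.S) (A2 : Arena C) (s2 : A2.S),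
    InD1 Y A1 → InD1 Y A2 →
    (∀ w ∈ sk.lang sk.init m,
        prefSetLE pref (shiftSet w (stratSet A2 Xt s2)) (shiftSet w (stratSet A1 Xt s1))) ∨
    (∀ w ∈ sk.lang sk.init m,
        prefSetLE pref (shiftSet w (stratSet A1 Xt s1)) (shiftSet w (stratSet A2 Xt s2)))

/-- `ĉol(Hists(Ar, s, s))`: color words of histories from `s` back to `s`. -/
def loopColsIn (Ar : Arena C) (s : Ar.S) : Set (List C) :=
  {u | ∃ ρ : Hist Ar, ρ.Valid ∧ ρ.first = s ∧ ρ.out = s ∧ ρ.cols = u}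

/-- `X`-`Y`-`M`-selectivity. -/
def SelectiveFor (pref : PrefRel C) (Xt : StratType) (Y : ArenaKind)
    (sk : MemorySkeleton C) : Prop :=
  ∀ m : sk.M, ∀ (A1 : Arena C) (s1 : A1.S) (A2 : Arena C) (s2 : A2.S),
    InD1 Y A1 → InD1 Y A2 →
    A1.owner s1 = true → A2.owner s2 = true →
    loopColsIn A1 s1 ⊆ sk.lang m m → loopColsIn A2 s2 ⊆ sk.lang m m →
    ∀ w ∈ sk.lang sk.init m,
      prefSetLE pref
        (shiftSet w (stratSet (mergeArena A1 s1 A2 s2) Xt (none : Option (A1.S ⊕ A2.S))))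
        (shiftSet w (stratSet A1 Xt s1) ∪ shiftSet w (stratSet A2 Xt s2))

/-- Mixing is useless for a preference relation. -/
def MixingUseless (pref : PrefRel C) : Prop :=
  ∀ (ι : Type) (_ : Countable ι) (lam : ι → ℝ≥0∞) (μ ν : ι → Measure (ColSeq C)),
    (∀ i, 0 < lam i) → (∑' i, lam i) = 1 →
    (∀ i, IsProbabilityMeasure (μ i)) → (∀ i, IsProbabilityMeasure (ν i)) →
    (∀ i, pref.le (μ i) (ν i)) →
    pref.le (MeasureTheory.Measure.sum fun i => lam i • μ i)
      (MeasureTheory.Measure.sum fun i => lam i • ν i)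

/-- Pure strategies based on `sk` suffice for player 1 to play `X`-optimally in the
class `D^Y_1` of initialized one-player arenas of player 1. -/
def SufficesD1 (pref : PrefRel C) (Xt : StratType) (Y : ArenaKind)
    (sk : MemorySkeleton C) : Prop :=
  ∀ X : InitArena C, InD1 Y X.Ar →
    ∃ σ1 : Strategy X.Ar, σ1.PureFor X.I true ∧ σ1.BasedOnFor sk X.I true ∧
      OptimalFor1 pref.le X.Ar X.I Xt σ1

/-! ### Concatenation of a history and a play, coinciding strategies -/

/-- Concatenation `ρπ` of a history and a play (without repeating `out(ρ)`). -/
def Hist.concatPlay {Ar : Arena C} (ρ : Hist Ar) (π : Play Ar) : Play Ar where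
  st := fun i => if i < ρ.steps.length then ρ.stateAt i else π.st (i - ρ.steps.length)
  ac := fun i =>
    if h : i < ρ.steps.length then (ρ.steps.get ⟨i, h⟩).1 else π.ac (i - ρ.steps.length)

/-- `σ` coincides with `τ` on the history `ρ`: they agree on all proper prefixes of `ρ`. -/
def Coincide {Ar : Arena C} (σ τ : Strategy Ar) (ρ : Hist Ar) : Prop :=
  ∀ i < ρ.steps.length, σ (ρ.take i) = τ (ρ.take i)

/-! ### Histories and strategies through a split -/

/-- `Π^a`: the steps of a history relabelled with the last action played at `t`
(label `a` by default before the first visit to `t`). -/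
def piSteps (Ar : Arena C) (t : Ar.S) :
    Ar.A → Ar.S → List (Ar.A × Ar.S) → List (Ar.A × Option (Ar.A × Ar.S))
  | _, _, [] => []
  | lab, cur, (b, s') :: rest =>
      (b, reName Ar t (if cur = t then b else lab) s') ::
        piSteps Ar t (if cur = t then b else lab) s' rest

/-- `Π^a` on histories: from `Hists(Ar, ·)` to histories of the split on `t`. -/
def piHist (Ar : Arena C) (t : Ar.S) (a : Ar.A) (ρ : Hist Ar) : Hist (splitArena Ar t) :=
  ⟨reName Ar t a ρ.first, piSteps Ar t a ρ.first ρ.steps⟩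

/-- `(Π^a)⁻¹`: forgetting the copy labels of a history of the split. -/
def unSplitHist (Ar : Arena C) (t : Ar.S) (ρ : Hist (splitArena Ar t)) : Hist Ar :=
  ⟨splitBase Ar t ρ.first, ρ.steps.map fun q => (q.1, splitBase Ar t q.2)⟩

/-- `Λ_i^a(σ) = σ ∘ (Π^a)⁻¹`: the strategy on the split corresponding to a strategy
on the original arena. -/
def lamStrat (Ar : Arena C) (t : Ar.S) (σ : Strategy Ar) : Strategy (splitArena Ar t) :=
  fun ρ => σ (unSplitHist Ar t ρ)

/-- Uniform relabelling of a history of `Ar` as a history of the copy `a` of the split. -/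
def embHist (Ar : Arena C) (t : Ar.S) (a : Ar.A) (ρ : Hist Ar) : Hist (splitArena Ar t) :=
  ⟨reName Ar t a ρ.first, ρ.steps.map fun q => (q.1, reName Ar t a q.2)⟩

/-- The initialized subarena `A_a` of an arena in which only the action `a` is
available at `t`. -/
noncomputable def restrictToAction (Ar : Arena C) (t : Ar.S) (a : Ar.A)
    (hA : Ar.avail t a) : Arena C :=
  restrictArena Ar (fun u => if u = t then {a} else Set.univ) (by
    intro u
    by_cases h : u = t
    · subst h
      exact ⟨a, by simp, hA⟩
    · obtain ⟨b, hb⟩ := Ar.nonblocking u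
      exact ⟨b, by simp [h], hb⟩)

/-! ### Weak parity -/

/-- The weak parity winning condition on `C = ℕ`: the greatest color seen exists
and is even. -/
def Wwp : Set (ColSeq ℕ) :=
  {w | ∃ m : ℕ, (∀ i : ℕ, w i ≤ m) ∧ (∃ i : ℕ, w i = m) ∧ Even m}

/-- The preference relation induced by the weak parity winning condition. -/
def prefWP : PrefRel ℕ where
  le := fun μ ν => μ Wwp ≤ ν Wwp
  refl := fun _ _ => le_rfl
  trans := fun _ _ _ _ _ _ h1 h2 => le_trans h1 h2
  total := fun _ _ _ _ => le_total _ _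

/-- The memory skeleton `M_max` remembering the greatest color seen so far. -/
noncomputable def Mmax : MemorySkeleton ℕ where
  M := ℕ
  init := 0
  upd := max
  reach_fin := by
    intro B hB
    have hbd : ∀ (u : List ℕ) (a : ℕ), (∀ c ∈ u, c ∈ B) →
        u.foldl max a ≤ max a (hB.toFinset.sup id) := by
      intro u
      induction u with
      | nil => intro a _; simp
      | cons c rest ih =>
          intro a hc
          have hcB : c ∈ hB.toFinset := hB.mem_toFinset.2 (hc c (by simp))
          have hcs : c ≤ hB.toFinset.sup id := Finset.le_sup (f := id) hcB
          have h1 := ih (max a c) (fun d hd => hc d (by simp [hd]))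
          simp only [List.foldl_cons]
          omega
    refine Set.Finite.subset (Set.finite_Iic (hB.toFinset.sup id)) ?_
    rintro m ⟨u, hu, hrun⟩
    have := hbd u 0 hu
    rw [hrun] at this
    simpa using this

/-! ### Threshold discounted sum -/

/-- `W = {w | Disc_λ(w) exists and is ≥ 0}`. -/
def WDisc (lam : ℝ) : Set (ColSeq ℝ) :=
  {w | ∃ L : ℝ, Filter.Tendsto (fun n => ∑ i ∈ Finset.range n, lam ^ i * w i)
      Filter.atTop (nhds L) ∧ 0 ≤ L}

lemma restrict_prob_pos {C : Type*} (Ar : Arena C) (keep : Ar.S → Set Ar.A)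
    (hk : ∀ s, ∃ a ∈ keep s, Ar.avail s a) (s : Ar.S) (a : Ar.A) (s' : Ar.S)
    (h : 0 < (restrictArena Ar keep hk).prob s a s') : 0 < Ar.prob s a s' := by
  by_cases hks : a ∈ keep s
  · have htr : (restrictArena Ar keep hk).tr s a = Ar.tr s a := by
      simp [restrictArena, hks]
    cases ho : Ar.tr s a with
    | none => rw [ho] at htr; simp [Arena.prob, htr] at h
    | some p =>
        rw [ho] at htr
        simp only [Arena.prob, htr, ho] at h ⊢
        exact h
  · have htr : (restrictArena Ar keep hk).tr s a = none := by
      simp [restrictArena, hks]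
    simp [Arena.prob, htr] at h

lemma splitBase_reName {C : Type*} (Ar : Arena C) (t : Ar.S) (lab : Ar.A) (s : Ar.S) :
    splitBase Ar t (reName Ar t lab s) = s := by
  by_cases h : s = t <;> simp [reName, splitBase, h]

lemma split_prob_pos {C : Type*} (Ar : Arena C) (t : Ar.S) (q q' : Option (Ar.A × Ar.S))
    (b : Ar.A) (h : 0 < (splitArena Ar t).prob q b q') :
    0 < Ar.prob (splitBase Ar t q) b (splitBase Ar t q') := by
  have key : ∀ (u : Ar.S) (lab : Ar.A),
      0 < (Arena.prob (splitArena Ar t) q b q' : ℝ≥0∞) →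
      (splitArena Ar t).tr q b = (Ar.tr u b).map (fun p => p.map (reName Ar t lab)) →
      0 < Ar.prob u b (splitBase Ar t q') := by
    intro u lab hpos htr
    cases ho : Ar.tr u b with
    | none =>
        rw [ho] at htr
        simp [Arena.prob, htr] at hpos
    | some p =>
        rw [ho] at htr
        simp only [Option.map_some] at htr
        have : (p.map (reName Ar t lab)) q' ≠ 0 := by
          simp only [Arena.prob, htr] at hpos
          exact hpos.ne'
        rw [← PMF.mem_support_iff, PMF.support_map] at this
        obtain ⟨s', hs', hmap⟩ := this
        rw [← hmap, splitBase_reName]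
        have := (PMF.mem_support_iff _ _).1 hs'
        simp only [Arena.prob, ho]
        exact pos_iff_ne_zero.2 this
  rcases q with _ | ⟨lab, s⟩
  · exact key t b h rfl
  · exact key s lab h rfl


/-- (Lemma 4.5.) If `𝔄` is closed by subarena and by split, then the class of all
initialized arenas of `𝔄` covered by a memory skeleton `sk` is itself closed by
subarena and by split. -/
theorem covered_subclass_closed {C : Type*} (sk : MemorySkeleton C)
    (𝔄 : Set (InitArena C)) (hSub : ClosedBySubarena 𝔄) (hSplit : ClosedBySplit 𝔄) :
    ClosedBySubarena {X : InitArena C | X ∈ 𝔄 ∧ Covered X sk} ∧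
      ClosedBySplit {X : InitArena C | X ∈ 𝔄 ∧ Covered X sk} := by
  constructor
  · rintro X ⟨hX, φ, hinit, hstep⟩ keep hk
    refine ⟨hSub X hX keep hk, φ, hinit, ?_⟩
    intro s a s' h
    exact hstep s a s' (restrict_prob_pos X.Ar keep hk s a s' h)
  · rintro X ⟨hX, φ, hinit, hstep⟩ t
    refine ⟨hSplit X hX t, fun q => φ (splitBase X.Ar t q), ?_, ?_⟩
    · rintro q ⟨a, s, ha, hs, rfl⟩
      show φ (splitBase X.Ar t (reName X.Ar t a s)) = sk.init
      rw [splitBase_reName]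
      exact hinit s hs
    · intro q b q' h
      exact hstep _ b _ (split_prob_pos X.Ar t q q' b h)

end StochGames
end

section
/- Weak parity in deterministic games: Let C = ℕ and let ⊑_wp be the preference relation induced by the weak parity condition W_wp (μ ⊑_wp μ' iff μ(W_wp) ≤ μ'(W_wp)). Then every initialized two-player deterministic arena admits a pure memoryless P-subgame perfect equilibrium for ⊑_wp; in particular, both players have pure memoryless P-optimal strategies in every initialized two-player deterministic arena. -/
open MeasureTheory (Measure IsProbabilityMeasure)
open scoped ENNReal
open scoped Classical

namespace StochGames

variable {C : Type*}

/-!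
In a deterministic arena a pure strategy profile induces a single play, so every measure involved
is a Dirac mass, and weak parity compares two plays through the rank of their maximal colors
(`colorRank`), an order that survives every common prefix. Positional strategies that are optimal
for this rank from every state therefore form a subgame perfect equilibrium. They are built by
induction on the largest color `d`: the player favoured by `d` plays the attractor strategy to `d`
on its attractor, where `d` is then seen and decides the play, and outside the attractor the game
without `d`-colored transitions and without entries into the attractor has smaller colors.
-/

open MeasureTheory

section ColorSequences

variable {C : Type*}

lemma prependWord_nil : prependWord ([] : List C) = id := by
  funext w i
  simp [prependWord]

lemma shiftLE_nil (pref : PrefRel C) : shiftLE pref [] = pref.le := by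
  funext μ ν
  simp [shiftLE, shiftMeasure, prependWord_nil]

lemma measurableSet_wordCyl (u : List C) : MeasurableSet (wordCyl u) :=
  MeasurableSpace.measurableSet_generateFrom ⟨u, rfl⟩

lemma mem_wordCyl_ofFn {n : ℕ} (g : Fin n → C) (w : ColSeq C) :
    w ∈ wordCyl (List.ofFn g) ↔ ∀ j : Fin n, w j = g j := by
  simp only [wordCyl, Set.mem_ofPred_eq, List.get_eq_getElem, List.getElem_ofFn]
  exact ⟨fun h j => h ⟨j, by simp⟩, fun h j => h ⟨j, by simpa using j.2⟩⟩

lemma measurable_colSeq_of_apply {α : Type*} [MeasurableSpace α] {f : α → ColSeq C}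
    (hf : ∀ i c, MeasurableSet {a | f a i = c}) : Measurable f := by
  refine measurable_generateFrom ?_
  rintro _ ⟨u, rfl⟩
  have : f ⁻¹' wordCyl u = ⋂ i : Fin u.length, {a | f a i = u.get i} := by
    ext a; simp [wordCyl]
  rw [this]
  exact MeasurableSet.iInter fun i => hf _ _

lemma measurableSet_apply_eq [Countable C] (i : ℕ) (c : C) :
    MeasurableSet {w : ColSeq C | w i = c} := by
  have : {w : ColSeq C | w i = c} =
      ⋃ g : {g : Fin (i + 1) → C // g (Fin.last i) = c}, wordCyl (List.ofFn g.1) := by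
    ext w
    simp only [Set.mem_ofPred_eq, Set.mem_iUnion, mem_wordCyl_ofFn]
    refine ⟨fun h => ⟨⟨fun j => w j, h⟩, fun j => rfl⟩, ?_⟩
    rintro ⟨⟨g, hg⟩, hw⟩
    simpa [hg] using hw (Fin.last i)
  rw [this]
  exact MeasurableSet.iUnion fun g => measurableSet_wordCyl _

lemma measurable_prependWord [Countable C] (u : List C) : Measurable (prependWord u) := by
  refine measurable_colSeq_of_apply fun i c => ?_
  by_cases hi : i < u.length
  · simp only [prependWord, dif_pos hi]
    exact MeasurableSet.const _
  · simpa only [prependWord, dif_neg hi] using measurableSet_apply_eq (C := C) _ c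

lemma shiftMeasure_dirac [Countable C] (u : List C) (w : ColSeq C) :
    shiftMeasure u (Measure.dirac w) = Measure.dirac (prependWord u w) :=
  Measure.map_dirac' (measurable_prependWord u) w

end ColorSequences

section WeakParity

/-- Orders maximal colors for weak parity: after a prefix of maximal color `m`, a play of maximal
color `c` wins iff `max m c` is even, which holds for more `m` when `c` is a larger even color or a
smaller odd one. -/
def colorRank (c : ℕ) : ℤ := if Even c then c else -c

lemma abs_colorRank (c : ℕ) : |colorRank c| = c := by
  unfold colorRank; split_ifs <;> simp

lemma even_max_of_colorRank_le {m c c' : ℕ} (h : colorRank c' ≤ colorRank c)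
    (h' : Even (max m c')) : Even (max m c) := by
  simp only [colorRank, Nat.even_iff] at *
  split_ifs at h <;> omega

variable {x : ColSeq ℕ}

lemma mem_Wwp_iff (hx : BddAbove (Set.range x)) : x ∈ Wwp ↔ Even (⨆ i, x i) := by
  constructor
  · rintro ⟨m, hle, ⟨i, rfl⟩, hm⟩
    rwa [le_antisymm (ciSup_le hle) (le_ciSup hx i)]
  · exact fun h => ⟨_, le_ciSup hx, Nat.sSup_mem (Set.range_nonempty x) hx, h⟩

lemma prependWord_le_max (hx : BddAbove (Set.range x)) (u : List ℕ) (i : ℕ) :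
    prependWord u x i ≤ max (u.foldr max 0) (⨆ j, x j) := by
  unfold prependWord
  split
  · exact le_max_of_le_left (List.le_max_of_le (List.get_mem u _) le_rfl)
  · exact le_max_of_le_right (le_ciSup hx _)

lemma iSup_prependWord (hx : BddAbove (Set.range x)) (u : List ℕ) :
    ⨆ i, prependWord u x i = max (u.foldr max 0) (⨆ i, x i) := by
  have hux : BddAbove (Set.range (prependWord u x)) :=
    ⟨_, Set.forall_mem_range.2 (prependWord_le_max hx u)⟩
  refine le_antisymm (ciSup_le (prependWord_le_max hx u)) (max_le ?_ (ciSup_le fun j => ?_))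
  · refine List.max_le_of_forall_le u _ fun c hc => ?_
    obtain ⟨i, rfl⟩ := List.get_of_mem hc
    convert le_ciSup hux i.1 using 1
    simp [prependWord]
  · convert le_ciSup hux (u.length + j) using 1
    simp [prependWord]

lemma prependWord_mem_Wwp_of_colorRank_le {y : ColSeq ℕ} (hx : BddAbove (Set.range x))
    (hy : BddAbove (Set.range y)) (h : colorRank (⨆ i, y i) ≤ colorRank (⨆ i, x i))
    (u : List ℕ) (hyu : prependWord u y ∈ Wwp) : prependWord u x ∈ Wwp := by
  have hbdd : ∀ {z : ColSeq ℕ}, BddAbove (Set.range z) → BddAbove (Set.range (prependWord u z)) :=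
    fun hz => ⟨_, Set.forall_mem_range.2 (prependWord_le_max hz u)⟩
  rw [mem_Wwp_iff (hbdd hy), iSup_prependWord hy] at hyu
  rw [mem_Wwp_iff (hbdd hx), iSup_prependWord hx]
  exact even_max_of_colorRank_le h hyu

lemma measurableSet_Wwp : MeasurableSet Wwp := by
  have : Wwp = ⋃ m : ℕ, ⋃ _ : Even m,
      (⋂ i, ⋃ c ∈ Set.Iic m, {w : ColSeq ℕ | w i = c}) ∩ ⋃ i, {w : ColSeq ℕ | w i = m} := by
    ext w
    simp [Wwp, and_comm, and_left_comm]
  rw [this]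
  refine MeasurableSet.iUnion fun m => MeasurableSet.iUnion fun _ => .inter ?_ ?_
  · exact .iInter fun i => .biUnion (Set.to_countable _) fun c _ => measurableSet_apply_eq i c
  · exact .iUnion fun i => measurableSet_apply_eq i m

end WeakParity

section Histories

variable {C : Type*} {Ar : Arena C}

def Hist.extend (ρ : Hist Ar) (x : Ar.A × Ar.S) : Hist Ar := ⟨ρ.first, ρ.steps ++ [x]⟩

@[simp]
lemma Hist.out_extend (ρ : Hist Ar) (x : Ar.A × Ar.S) : (ρ.extend x).out = x.2 := by
  simp [Hist.extend, Hist.out]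

@[simp]
lemma Hist.length_extend (ρ : Hist Ar) (x : Ar.A × Ar.S) :
    (ρ.extend x).steps.length = ρ.steps.length + 1 := by
  simp [Hist.extend]

lemma Hist.extend_inj {ρ ρ' : Hist Ar} {x y : Ar.A × Ar.S} :
    ρ.extend x = ρ'.extend y ↔ ρ = ρ' ∧ x = y := by
  refine ⟨fun h => ?_, fun ⟨h1, h2⟩ => h1 ▸ h2 ▸ rfl⟩
  obtain ⟨hfirst, hsteps⟩ := Hist.mk.inj h
  obtain ⟨h1, h2⟩ := List.append_inj' hsteps rfl
  exact ⟨by cases ρ; cases ρ'; simp_all, by simpa using h2⟩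

lemma Hist.out_append (ρ ρ' : Hist Ar) (h : ρ'.first = ρ.out) :
    Hist.out (⟨ρ.first, ρ.steps ++ ρ'.steps⟩ : Hist Ar) = ρ'.out := by
  simp only [Hist.out, List.map_append, List.getLastD_eq_getLast?, List.getLast?_append]
  rw [h, Hist.out, List.getLastD_eq_getLast?]
  cases (ρ'.steps.map Prod.snd).getLast? <;> simp [Option.or, Option.getD]

lemma Hist.out_cons (s : Ar.S) (y : Ar.A × Ar.S) (l : List (Ar.A × Ar.S)) :
    Hist.out (⟨s, y :: l⟩ : Hist Ar) = Hist.out (⟨y.2, l⟩ : Hist Ar) :=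
  List.getLastD_cons ..

lemma Arena.validSteps_append (s : Ar.S) (l : List (Ar.A × Ar.S)) (x : Ar.A × Ar.S) :
    Ar.ValidSteps s (l ++ [x]) ↔
      Ar.ValidSteps s l ∧ 0 < Ar.prob (⟨s, l⟩ : Hist Ar).out x.1 x.2 := by
  induction l generalizing s with
  | nil => simp [Arena.ValidSteps, Hist.out]
  | cons y l ih =>
    simp only [List.cons_append, Arena.ValidSteps, ih, and_assoc, Hist.out_cons]

lemma Arena.prob_of_tr_eq_some {u : Ar.S} {a : Ar.A} {p : PMF Ar.S} (h : Ar.tr u a = some p)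
    (t : Ar.S) : Ar.prob u a t = p t := by
  simp [Arena.prob, h]

lemma Hist.Valid.extend {ρ : Hist Ar} (hρ : ρ.Valid) {x : Ar.A × Ar.S}
    (hx : 0 < Ar.prob ρ.out x.1 x.2) : (ρ.extend x).Valid :=
  (Arena.validSteps_append ρ.first ρ.steps x).2 ⟨hρ, hx⟩

lemma Hist.ForPlayer.mono {ρ : Hist Ar} {I J : Set Ar.S} {pl : Bool} (h : ρ.ForPlayer J pl)
    (hJI : J ⊆ I) : ρ.ForPlayer I pl :=
  ⟨⟨h.1.1, hJI h.1.2⟩, h.2⟩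

lemma StratType.Mem.mono {X : StratType} {σ : Strategy Ar} {I J : Set Ar.S} {pl : Bool}
    (h : X.Mem σ I pl) (hJI : J ⊆ I) : X.Mem σ J pl := by
  obtain ⟨hproper, hX⟩ := h
  have pure_mono (hp : σ.PureFor I pl) : σ.PureFor J pl := fun ρ hρ => hp ρ (hρ.mono hJI)
  have fm_mono (hf : σ.FMFor I pl) : σ.FMFor J pl := by
    obtain ⟨sk, nxt, h⟩ := hf
    exact ⟨sk, nxt, fun ρ hρ => h ρ (hρ.mono hJI)⟩
  refine ⟨fun ρ hρ => hproper ρ (hρ.mono hJI), ?_⟩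
  cases X with
  | PFM => exact ⟨pure_mono hX.1, fm_mono hX.2⟩
  | P => exact pure_mono hX
  | RFM => exact fm_mono hX
  | G => trivial

end Histories

section Plays

variable {C : Type*} {Ar : Arena C}

def Play.prefixHist (p : Play Ar) (n : ℕ) : Hist Ar :=
  ⟨p.st 0, List.ofFn fun i : Fin n => (p.ac i, p.st (i + 1))⟩

@[simp]
lemma Play.length_prefixHist (p : Play Ar) (n : ℕ) : (p.prefixHist n).steps.length = n := by
  simp [Play.prefixHist]

lemma Play.prefixHist_succ (p : Play Ar) (n : ℕ) :
    p.prefixHist (n + 1) = (p.prefixHist n).extend (p.ac n, p.st (n + 1)) := by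
  simp only [Play.prefixHist, Hist.extend, Hist.mk.injEq, true_and]
  rw [List.ofFn_succ', List.concat_eq_append]
  rfl

lemma mem_cylSet_iff {p : Play Ar} {ρ : Hist Ar} :
    p ∈ cylSet ρ ↔ p.prefixHist ρ.steps.length = ρ := by
  obtain ⟨first, steps⟩ := ρ
  simp only [cylSet, Set.mem_ofPred_eq, Play.prefixHist, Hist.mk.injEq]
  refine and_congr Iff.rfl ⟨fun h => List.ext_get (by simp) fun i h1 h2 => ?_, fun h i => ?_⟩
  · simp [(h ⟨i, h2⟩).1, (h ⟨i, h2⟩).2]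
  · have hi := List.getElem_of_eq h (by simp : i.1 < (List.ofFn _).length)
    rw [List.getElem_ofFn] at hi
    simp [← hi]

lemma iInter_cylSet_prefixHist (p : Play Ar) : ⋂ n, cylSet (p.prefixHist n) = {p} := by
  ext q
  simp only [Set.mem_iInter, Set.mem_singleton_iff]
  refine ⟨fun h => ?_, fun h n => h ▸ mem_cylSet_iff.2 (by simp)⟩
  have hsteps (i : ℕ) := (h (i + 1)).2 ⟨i, by simp⟩
  simp only [Play.prefixHist, List.get_eq_getElem, List.getElem_ofFn] at hsteps
  cases q; cases p
  simp only [Play.mk.injEq]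
  exact ⟨funext fun | 0 => (h 0).1 | i + 1 => (hsteps i).2, funext fun i => (hsteps i).1⟩

lemma measurableSet_cylSet (ρ : Hist Ar) : MeasurableSet (cylSet ρ) :=
  MeasurableSpace.measurableSet_generateFrom ⟨ρ, rfl⟩

lemma Play.cols_prefixHist (p : Play Ar) (n : ℕ) :
    (p.prefixHist n).cols = List.ofFn fun i : Fin n => colsω p i := by
  induction n generalizing p with
  | zero => rfl
  | succ n ih =>
    have := ih ⟨fun i => p.st (i + 1), fun i => p.ac (i + 1)⟩
    simp only [Play.prefixHist, Hist.cols, List.ofFn_succ, Arena.colsFrom] at this ⊢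
    simp only [Fin.val_zero, Fin.val_succ, zero_add, this]
    rfl

instance : Countable (Hist Ar) :=
  Function.Injective.countable (f := fun ρ : Hist Ar => (ρ.first, ρ.steps)) fun ρ ρ' h => by
    cases ρ; cases ρ'; simp_all

lemma measurable_colsω : Measurable (colsω : Play Ar → ColSeq C) := by
  refine measurable_generateFrom ?_
  rintro _ ⟨u, rfl⟩
  have : colsω ⁻¹' wordCyl u = ⋃ ρ : {ρ : Hist Ar // ρ.cols = u}, cylSet ρ.1 := by
    ext p
    simp only [Set.mem_preimage, Set.mem_iUnion, mem_cylSet_iff]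
    constructor
    · intro hp
      refine ⟨⟨p.prefixHist u.length, ?_⟩, by simp⟩
      rw [Play.cols_prefixHist]
      exact List.ext_get (by simp) fun i _ h => by simpa using hp ⟨i, h⟩
    · rintro ⟨⟨ρ, hρ⟩, hp⟩
      subst hρ
      dsimp only at hp
      rw [← hp, Play.cols_prefixHist]
      exact (mem_wordCyl_ofFn _ _).2 fun j => rfl
  rw [this]
  exact MeasurableSet.iUnion fun ρ => measurableSet_cylSet _

end Plays

lemma eq_dirac_of_measure_eq_one {α : Type*} [MeasurableSpace α] {μ : Measure α}
    [IsProbabilityMeasure μ] {B : ℕ → Set α} (hB : ∀ n, MeasurableSet (B n))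
    (hμ : ∀ n, μ (B n) = 1) {x : α} (hx : ⋂ n, B n = {x}) : μ = Measure.dirac x := by
  have hae : ∀ᵐ y ∂μ, y ∈ ({x} : Set α) := by
    rw [← hx]
    exact countable_iInter_mem.2 fun n => (mem_ae_iff_prob_eq_one (hB n)).2 (hμ n)
  have hx1 : μ {x} = 1 := (mem_ae_iff_prob_eq_one (hx ▸ MeasurableSet.iInter hB)).1 hae
  calc μ = μ.restrict {x} := (Measure.restrict_eq_self_of_ae_mem hae).symm
    _ = Measure.dirac x := by rw [Measure.restrict_singleton, hx1, one_smul]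

section InducedPlay

variable {C : Type*} {Ar : Arena C} (σ1 σ2 : Strategy Ar) (s : Ar.S)

def activeMove (ρ : Hist Ar) : PMF Ar.A := if Ar.owner ρ.out then σ1 ρ else σ2 ρ

def IsPureProfile : Prop := StratType.P.Mem σ1 {s} true ∧ StratType.P.Mem σ2 {s} false

/-- The action chosen by a pure profile after `ρ` and its successor in a deterministic arena
(a junk value where the profile is not pure or the arena not deterministic). -/
noncomputable def nextStep (ρ : Hist Ar) : Ar.A × Ar.S :=
  @Classical.epsilon _ ⟨((Ar.nonblocking ρ.out).choose, ρ.out)⟩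
    fun x => activeMove σ1 σ2 ρ = PMF.pure x.1 ∧ Ar.tr ρ.out x.1 = some (PMF.pure x.2)

noncomputable def inducedHist : ℕ → Hist Ar
  | 0 => ⟨s, []⟩
  | n + 1 => (inducedHist n).extend (nextStep σ1 σ2 (inducedHist n))

noncomputable def inducedPlay : Play Ar :=
  ⟨fun n => (inducedHist σ1 σ2 s n).out, fun n => (nextStep σ1 σ2 (inducedHist σ1 σ2 s n)).1⟩

lemma stepWeight_eq (ρ : Hist Ar) (a : Ar.A) (t : Ar.S) :
    stepWeight Ar σ1 σ2 ρ a t = activeMove σ1 σ2 ρ a * Ar.prob ρ.out a t := by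
  unfold stepWeight activeMove
  split_ifs <;> rfl

lemma histProbAux_append (first : Ar.S) (x : Ar.A × Ar.S) (done rest : List (Ar.A × Ar.S)) :
    histProbAux Ar σ1 σ2 first done (rest ++ [x]) =
      histProbAux Ar σ1 σ2 first done rest * stepWeight Ar σ1 σ2 ⟨first, done ++ rest⟩ x.1 x.2 := by
  induction rest generalizing done with
  | nil => simp [histProbAux]
  | cons y rest ih => simp [histProbAux, ih, mul_assoc]

lemma histProb_extend (ρ : Hist Ar) (x : Ar.A × Ar.S) :
    histProb Ar σ1 σ2 (ρ.extend x) = histProb Ar σ1 σ2 ρ * stepWeight Ar σ1 σ2 ρ x.1 x.2 :=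
  histProbAux_append σ1 σ2 ρ.first x [] ρ.steps

@[simp]
lemma inducedHist_first (n : ℕ) : (inducedHist σ1 σ2 s n).first = s := by
  induction n with
  | zero => rfl
  | succ n ih => exact ih

@[simp]
lemma inducedHist_length (n : ℕ) : (inducedHist σ1 σ2 s n).steps.length = n := by
  induction n with
  | zero => rfl
  | succ n ih => simp [inducedHist, ih]

lemma prefixHist_inducedPlay (n : ℕ) :
    (inducedPlay σ1 σ2 s).prefixHist n = inducedHist σ1 σ2 s n := by
  induction n with
  | zero => rfl
  | succ n ih =>
    rw [Play.prefixHist_succ, ih, inducedHist]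
    exact congrArg _ (Prod.ext rfl (Hist.out_extend _ _))

lemma inducedPlay_mem_cylSet_iff {ρ : Hist Ar} :
    inducedPlay σ1 σ2 s ∈ cylSet ρ ↔ inducedHist σ1 σ2 s ρ.steps.length = ρ := by
  rw [mem_cylSet_iff, prefixHist_inducedPlay]

variable {σ1 σ2 s}

lemma IsPureProfile.exists_activeMove (h : IsPureProfile σ1 σ2 s) {ρ : Hist Ar} (hv : ρ.Valid)
    (hf : ρ.first = s) : ∃ a, activeMove σ1 σ2 ρ = PMF.pure a ∧ Ar.avail ρ.out a := by
  have hst : ρ.Starts {s} := ⟨hv, hf⟩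
  unfold activeMove
  cases ho : Ar.owner ρ.out
  · obtain ⟨a, ha⟩ := h.2.2 ρ ⟨hst, ho⟩
    exact ⟨a, by simpa using ha, h.2.1 ρ ⟨hst, ho⟩ a (by simp [ha])⟩
  · obtain ⟨a, ha⟩ := h.1.2 ρ ⟨hst, ho⟩
    exact ⟨a, by simpa using ha, h.1.1 ρ ⟨hst, ho⟩ a (by simp [ha])⟩

lemma nextStep_spec (hdet : Ar.IsDeterministic) (h : IsPureProfile σ1 σ2 s) {ρ : Hist Ar}
    (hv : ρ.Valid) (hf : ρ.first = s) :
    activeMove σ1 σ2 ρ = PMF.pure (nextStep σ1 σ2 ρ).1 ∧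
      Ar.tr ρ.out (nextStep σ1 σ2 ρ).1 = some (PMF.pure (nextStep σ1 σ2 ρ).2) := by
  obtain ⟨a, ha, hav⟩ := h.exists_activeMove hv hf
  obtain ⟨p, hp⟩ := Option.isSome_iff_exists.1 hav
  obtain ⟨t, rfl⟩ := hdet _ _ _ hp
  exact Classical.epsilon_spec (p := fun x : Ar.A × Ar.S =>
    activeMove σ1 σ2 ρ = PMF.pure x.1 ∧ Ar.tr ρ.out x.1 = some (PMF.pure x.2)) ⟨(a, t), ha, hp⟩

lemma stepWeight_eq_ite (hdet : Ar.IsDeterministic) (h : IsPureProfile σ1 σ2 s) {ρ : Hist Ar}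
    (hv : ρ.Valid) (hf : ρ.first = s) (x : Ar.A × Ar.S) :
    stepWeight Ar σ1 σ2 ρ x.1 x.2 = if x = nextStep σ1 σ2 ρ then 1 else 0 := by
  obtain ⟨hmove, htr⟩ := nextStep_spec hdet h hv hf
  obtain ⟨a, t⟩ := x
  rw [stepWeight_eq, hmove]
  by_cases ha : a = (nextStep σ1 σ2 ρ).1
  · rw [ha, Arena.prob_of_tr_eq_some htr, PMF.pure_apply_self, one_mul]
    simp [PMF.pure_apply, Prod.ext_iff]
  · rw [PMF.pure_apply, if_neg ha, zero_mul, if_neg fun hx => ha (by rw [← hx])]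

lemma inducedHist_valid (hdet : Ar.IsDeterministic) (h : IsPureProfile σ1 σ2 s) (n : ℕ) :
    (inducedHist σ1 σ2 s n).Valid := by
  induction n with
  | zero => trivial
  | succ n ih =>
    refine ih.extend ?_
    rw [Arena.prob_of_tr_eq_some (nextStep_spec hdet h ih (inducedHist_first ..)).2,
      PMF.pure_apply_self]
    exact one_pos

lemma histProb_eq_ite (hdet : Ar.IsDeterministic) (h : IsPureProfile σ1 σ2 s) (ρ : Hist Ar)
    (hρ : ρ.first = s) :
    histProb Ar σ1 σ2 ρ = if inducedHist σ1 σ2 s ρ.steps.length = ρ then 1 else 0 := by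
  obtain ⟨first, steps⟩ := ρ
  dsimp only at hρ
  subst hρ
  induction steps using List.reverseRecOn with
  | nil => simp [histProb, histProbAux, inducedHist]
  | append_singleton l x ih =>
    rw [show (⟨first, l ++ [x]⟩ : Hist Ar) = (⟨first, l⟩ : Hist Ar).extend x from rfl,
      histProb_extend, ih, Hist.length_extend, inducedHist, Hist.extend_inj]
    dsimp only
    by_cases hl : inducedHist σ1 σ2 first l.length = ⟨first, l⟩
    · have hv := inducedHist_valid hdet h l.length
      rw [hl] at hv
      simp only [hl, if_true, one_mul, true_and, stepWeight_eq_ite hdet h hv rfl, eq_comm]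
    · simp [hl]

lemma isPlayMeasure_dirac (hdet : Ar.IsDeterministic) (h : IsPureProfile σ1 σ2 s) :
    IsPlayMeasure Ar σ1 σ2 s (Measure.dirac (inducedPlay σ1 σ2 s)) := by
  refine ⟨inferInstance, fun ρ hρ => ?_, fun ρ hρ => ?_⟩
  · rw [Measure.dirac_apply' _ (measurableSet_cylSet ρ), histProb_eq_ite hdet h ρ hρ]
    simp [Set.indicator, inducedPlay_mem_cylSet_iff]
  · rw [Measure.dirac_apply' _ (measurableSet_cylSet ρ), Set.indicator_of_notMem]
    intro hm
    exact hρ (by rw [← (inducedPlay_mem_cylSet_iff σ1 σ2 s).1 hm, inducedHist_first])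

lemma playMeasure_eq_dirac (hdet : Ar.IsDeterministic) (h : IsPureProfile σ1 σ2 s) :
    playMeasure Ar σ1 σ2 s = Measure.dirac (inducedPlay σ1 σ2 s) := by
  -- `playMeasure` is chosen by `ε`: the Dirac mass witnesses existence, and the cylinders of
  -- mass one along the induced play then pin the chosen measure down.
  obtain ⟨hprob, hcyl, -⟩ : IsPlayMeasure Ar σ1 σ2 s (playMeasure Ar σ1 σ2 s) :=
    Classical.epsilon_spec ⟨_, isPlayMeasure_dirac hdet h⟩
  refine eq_dirac_of_measure_eq_one (fun n => measurableSet_cylSet _) (fun n => ?_)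
    (iInter_cylSet_prefixHist _)
  rw [prefixHist_inducedPlay, hcyl _ (inducedHist_first ..), histProb_eq_ite hdet h _
    (inducedHist_first ..), inducedHist_length, if_pos rfl]

lemma Pc_eq_dirac (hdet : Ar.IsDeterministic) (h : IsPureProfile σ1 σ2 s) :
    Pc Ar σ1 σ2 s = Measure.dirac (colsω (inducedPlay σ1 σ2 s)) := by
  rw [Pc, playMeasure_eq_dirac hdet h, Measure.map_dirac' measurable_colsω]

end InducedPlay

section DeterministicGames

/-- Player `true` maximises the payoff and player `false` minimises it; `gain pl` is the payoff as
seen by `pl`. -/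
def gain (pl : Bool) (x : ℤ) : ℤ := if pl then x else -x

@[simp] lemma gain_true (x : ℤ) : gain true x = x := rfl

@[simp] lemma gain_false (x : ℤ) : gain false x = -x := rfl

lemma gain_le_abs (pl : Bool) (x : ℤ) : gain pl x ≤ |x| := by
  cases pl
  exacts [neg_le_abs x, le_abs_self x]

lemma gain_of_ne {pl q : Bool} (h : q ≠ pl) (x : ℤ) : gain q x = -gain pl x := by
  cases q <;> cases pl <;> simp_all

lemma gain_colorRank (d : ℕ) : gain (decide (Even d)) (colorRank d) = d := by
  by_cases h : Even d <;> simp [colorRank, h]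

/-- `nx s a = none` means that `a` is not available at `s`. -/
structure DetGame where
  S : Type
  A : Type
  [finS : Finite S]
  [finA : Finite A]
  own : S → Bool
  nx : S → A → Option S
  cl : S → A → ℕ
  nonblock : ∀ s, ∃ a, (nx s a).isSome

attribute [instance] DetGame.finS DetGame.finA

namespace DetGame

variable (G : DetGame)

def IsPlay (π : ℕ → G.S × G.A) : Prop := ∀ i, G.nx (π i).1 (π i).2 = some (π (i + 1)).1

def Follows (π : ℕ → G.S × G.A) (pl : Bool) (g : G.S → G.A) : Prop :=
  ∀ i, G.own (π i).1 = pl → (π i).2 = g (π i).1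

noncomputable def payoff (π : ℕ → G.S × G.A) : ℤ := colorRank (⨆ i, G.cl (π i).1 (π i).2)

def ColorsLE (n : ℕ) : Prop := ∀ s a, (G.nx s a).isSome → G.cl s a ≤ n

def IsPositionalEquilibrium (f : Bool → G.S → G.A) (v : G.S → ℤ) : Prop :=
  (∀ pl s, (G.nx s (f pl s)).isSome) ∧
    ∀ pl π, G.IsPlay π → G.Follows π pl (f pl) → gain pl (v (π 0).1) ≤ gain pl (G.payoff π)

noncomputable def dflt (s : G.S) : G.A := (G.nonblock s).choose

lemma dflt_isSome (s : G.S) : (G.nx s (G.dflt s)).isSome := (G.nonblock s).choose_spec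

variable {G}

lemma IsPlay.isSome {π : ℕ → G.S × G.A} (hπ : G.IsPlay π) (i : ℕ) :
    (G.nx (π i).1 (π i).2).isSome := by
  rw [hπ i]; rfl

lemma IsPlay.shift {π : ℕ → G.S × G.A} (hπ : G.IsPlay π) (k : ℕ) :
    G.IsPlay fun i => π (k + i) :=
  fun i => hπ (k + i)

lemma abs_payoff_le {n : ℕ} (hb : G.ColorsLE n) {π : ℕ → G.S × G.A} (hπ : G.IsPlay π) :
    |G.payoff π| ≤ n := by
  rw [payoff, abs_colorRank]
  exact_mod_cast ciSup_le fun i => hb _ _ (hπ.isSome i)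

lemma payoff_eq_of_cl_eq {d : ℕ} (hb : G.ColorsLE d) {π : ℕ → G.S × G.A} (hπ : G.IsPlay π)
    {i : ℕ} (hi : G.cl (π i).1 (π i).2 = d) : G.payoff π = colorRank d := by
  have hle (j : ℕ) := hb _ _ (hπ.isSome j)
  rw [payoff, le_antisymm (ciSup_le hle) (hi ▸ le_ciSup ⟨d, Set.forall_mem_range.2 hle⟩ i)]

variable (G) (pl : Bool) (d : ℕ)

def Leads (T : Set G.S) (u : G.S) (a : G.A) : Prop := G.cl u a = d ∨ ∃ t ∈ T, G.nx u a = some t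

def attrStep (T : Set G.S) : Set G.S :=
  {u | if G.own u = pl then ∃ a, (G.nx u a).isSome ∧ G.Leads d T u a
    else ∀ a, (G.nx u a).isSome → G.Leads d T u a}

def attrN : ℕ → Set G.S
  | 0 => ∅
  | k + 1 => G.attrStep pl d (attrN k)

/-- The states from which player `pl` can force a transition of color `d`. -/
def attractor : Set G.S := ⋃ k, G.attrN pl d k

variable {G pl d}

lemma Leads.mono {T T' : Set G.S} (h : T ⊆ T') {u : G.S} {a : G.A} (hl : G.Leads d T u a) :
    G.Leads d T' u a :=
  hl.imp_right fun ⟨t, ht, hnx⟩ => ⟨t, h ht, hnx⟩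

lemma attrStep_mono {T T' : Set G.S} (h : T ⊆ T') : G.attrStep pl d T ⊆ G.attrStep pl d T' := by
  intro u hu
  simp only [attrStep, Set.mem_ofPred_eq] at hu ⊢
  split_ifs at hu ⊢
  · obtain ⟨a, ha, hl⟩ := hu
    exact ⟨a, ha, hl.mono h⟩
  · exact fun a ha => (hu a ha).mono h

lemma monotone_attrN : Monotone (G.attrN pl d) := by
  refine monotone_nat_of_le_succ fun k => ?_
  induction k with
  | zero => exact Set.empty_subset _
  | succ k ih => exact attrStep_mono ih

lemma attrN_subset_attractor (k : ℕ) : G.attrN pl d k ⊆ G.attractor pl d :=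
  Set.subset_iUnion _ k

lemma attrStep_attractor_subset : G.attrStep pl d (G.attractor pl d) ⊆ G.attractor pl d := by
  obtain ⟨K, hK⟩ := WellFoundedGT.monotone_chain_condition ⟨G.attrN pl d, monotone_attrN⟩
  have hattr : G.attractor pl d = G.attrN pl d K := by
    refine (Set.iUnion_subset fun k => ?_).antisymm (attrN_subset_attractor K)
    rcases le_total k K with hk | hk
    · exact monotone_attrN hk
    · exact (hK k hk).symm.subset
  rw [hattr]
  exact (hK (K + 1) K.le_succ).symm.subset

lemma exists_leads_of_mem_attrN_succ {k : ℕ} {u : G.S} (hu : u ∈ G.attrN pl d (k + 1))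
    (ho : G.own u = pl) : ∃ a, (G.nx u a).isSome ∧ G.Leads d (G.attrN pl d k) u a := by
  simpa only [attrN, attrStep, Set.mem_ofPred_eq, if_pos ho] using hu

lemma leads_of_mem_attrN_succ {k : ℕ} {u : G.S} (hu : u ∈ G.attrN pl d (k + 1))
    (ho : G.own u ≠ pl) {a : G.A} (ha : (G.nx u a).isSome) : G.Leads d (G.attrN pl d k) u a := by
  simp only [attrN, attrStep, Set.mem_ofPred_eq, if_neg ho] at hu
  exact hu a ha

lemma not_leads_of_not_mem_attractor {u : G.S} (hu : u ∉ G.attractor pl d) (ho : G.own u = pl)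
    {a : G.A} (ha : (G.nx u a).isSome) : ¬ G.Leads d (G.attractor pl d) u a := fun hl =>
  hu (attrStep_attractor_subset (by
    simp only [attrStep, Set.mem_ofPred_eq, if_pos ho]
    exact ⟨a, ha, hl⟩))

lemma exists_not_leads_of_not_mem_attractor {u : G.S} (hu : u ∉ G.attractor pl d)
    (ho : G.own u ≠ pl) : ∃ a, (G.nx u a).isSome ∧ ¬ G.Leads d (G.attractor pl d) u a := by
  by_contra hcon
  push Not at hcon
  exact hu (attrStep_attractor_subset (by
    simp only [attrStep, Set.mem_ofPred_eq, if_neg ho]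
    exact hcon))

variable (G pl d)

/-- Chosen at the first level of the attractor containing `u`, so that following it decreases the
level. -/
noncomputable def attrStrategy (u : G.S) : G.A :=
  if h : ∃ k, u ∈ G.attrN pl d (k + 1) ∧ G.own u = pl then
    (exists_leads_of_mem_attrN_succ (Nat.find_spec h).1 (Nat.find_spec h).2).choose
  else G.dflt u

variable {G pl d}

lemma attrStrategy_spec {k : ℕ} {u : G.S} (hu : u ∈ G.attrN pl d (k + 1)) (ho : G.own u = pl) :
    (G.nx u (G.attrStrategy pl d u)).isSome ∧
      G.Leads d (G.attrN pl d k) u (G.attrStrategy pl d u) := by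
  have h : ∃ k, u ∈ G.attrN pl d (k + 1) ∧ G.own u = pl := ⟨k, hu, ho⟩
  have hspec :=
    (exists_leads_of_mem_attrN_succ (Nat.find_spec h).1 (Nat.find_spec h).2).choose_spec
  rw [attrStrategy, dif_pos h]
  exact ⟨hspec.1, hspec.2.mono (monotone_attrN (Nat.find_min' h ⟨hu, ho⟩))⟩

lemma attrStrategy_isSome (u : G.S) : (G.nx u (G.attrStrategy pl d u)).isSome := by
  by_cases h : ∃ k, u ∈ G.attrN pl d (k + 1) ∧ G.own u = pl
  · obtain ⟨k, hk, ho⟩ := h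
    exact (attrStrategy_spec hk ho).1
  · rw [attrStrategy, dif_neg h]
    exact G.dflt_isSome u

lemma exists_cl_eq_of_mem_attrN {π : ℕ → G.S × G.A} (hπ : G.IsPlay π) {g : G.S → G.A}
    (hf : G.Follows π pl g) (hg : ∀ u ∈ G.attractor pl d, g u = G.attrStrategy pl d u) {k : ℕ}
    (hk : (π 0).1 ∈ G.attrN pl d k) : ∃ i, G.cl (π i).1 (π i).2 = d := by
  induction k generalizing π with
  | zero => exact absurd hk (Set.notMem_empty _)
  | succ k ih =>
    have hlead : G.Leads d (G.attrN pl d k) (π 0).1 (π 0).2 := by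
      by_cases ho : G.own (π 0).1 = pl
      · rw [hf 0 ho, hg _ (attrN_subset_attractor _ hk)]
        exact (attrStrategy_spec hk ho).2
      · exact leads_of_mem_attrN_succ hk ho (hπ.isSome 0)
    rcases hlead with hd | ⟨t, ht, hnx⟩
    · exact ⟨0, hd⟩
    · have h1 : (π 1).1 = t := Option.some_injective _ ((hπ 0).symm.trans hnx)
      obtain ⟨i, hi⟩ := ih (hπ.shift 1) (fun i => hf (1 + i)) (by simpa [h1] using ht)
      exact ⟨1 + i, hi⟩

lemma payoff_eq_of_mem_attractor (hb : G.ColorsLE d) {π : ℕ → G.S × G.A} (hπ : G.IsPlay π)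
    {g : G.S → G.A} (hf : G.Follows π pl g)
    (hg : ∀ u ∈ G.attractor pl d, g u = G.attrStrategy pl d u) {i : ℕ}
    (hi : (π i).1 ∈ G.attractor pl d) : G.payoff π = colorRank d := by
  obtain ⟨k, hk⟩ := Set.mem_iUnion.1 hi
  obtain ⟨j, hj⟩ :=
    exists_cl_eq_of_mem_attrN (hπ.shift i) (fun j => hf (i + j)) hg (k := k) (by simpa using hk)
  exact payoff_eq_of_cl_eq hb hπ hj

variable (G pl d)

/-- The game outside the attractor: the transitions that produce color `d` or enter the attractor
are removed, so the attractor cannot be entered and its colors are irrelevant (reset to `0`). -/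
noncomputable def residual : DetGame where
  S := G.S
  A := G.A
  own := G.own
  nx u a := if u ∉ G.attractor pl d ∧ G.Leads d (G.attractor pl d) u a then none else G.nx u a
  cl u a := if u ∈ G.attractor pl d then 0 else G.cl u a
  nonblock u := by
    by_cases hu : u ∈ G.attractor pl d
    · simpa [hu] using G.nonblock u
    · by_cases ho : G.own u = pl
      · obtain ⟨a, ha⟩ := G.nonblock u
        exact ⟨a, by simp [hu, not_leads_of_not_mem_attractor hu ho ha, ha]⟩
      · obtain ⟨a, ha, hl⟩ := exists_not_leads_of_not_mem_attractor hu ho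
        exact ⟨a, by simp [hu, hl, ha]⟩

variable {G pl d}

lemma residual_nx_eq_some_iff {u t : G.S} {a : G.A} (hu : u ∉ G.attractor pl d) :
    (G.residual pl d).nx u a = some t ↔
      G.nx u a = some t ∧ ¬ G.Leads d (G.attractor pl d) u a := by
  change (if _ then none else _) = _ ↔ _
  by_cases hl : G.Leads d (G.attractor pl d) u a <;> simp [hu, hl]

lemma nx_eq_some_of_residual {u t : G.S} {a : G.A} (h : (G.residual pl d).nx u a = some t) :
    G.nx u a = some t := by
  change (if _ then none else _) = _ at h
  split_ifs at h
  exact h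

lemma residual_cl_of_not_mem {u : G.S} (hu : u ∉ G.attractor pl d) (a : G.A) :
    (G.residual pl d).cl u a = G.cl u a :=
  if_neg hu

lemma colorsLE_residual {n : ℕ} (hb : G.ColorsLE (n + 1)) : (G.residual pl (n + 1)).ColorsLE n := by
  intro (u : G.S) (a : G.A) ha
  change (if _ then 0 else _) ≤ n
  by_cases hu : u ∈ G.attractor pl (n + 1)
  · rw [if_pos hu]
    exact Nat.zero_le n
  · obtain ⟨t, ht⟩ := Option.isSome_iff_exists.1 ha
    obtain ⟨hnx, hl⟩ := (residual_nx_eq_some_iff hu).1 ht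
    have hcl : G.cl u a ≠ n + 1 := fun h => hl (Or.inl h)
    have := hb u a (by rw [hnx]; rfl)
    rw [if_neg hu]
    omega

lemma residual_payoff_eq {π : ℕ → G.S × G.A} (h : ∀ i, (π i).1 ∉ G.attractor pl d) :
    (G.residual pl d).payoff π = G.payoff π :=
  congrArg colorRank (iSup_congr fun i => residual_cl_of_not_mem (h i) _)

lemma not_mem_of_residual_steps {π : ℕ → G.S × G.A} (h0 : (π 0).1 ∉ G.attractor pl d) {i : ℕ}
    (hsteps : ∀ j < i, (G.residual pl d).nx (π j).1 (π j).2 = some (π (j + 1)).1) :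
    (π i).1 ∉ G.attractor pl d := by
  induction i with
  | zero => exact h0
  | succ i ih =>
    have hi := ih fun j hj => hsteps j (by omega)
    obtain ⟨hnx, hl⟩ := (residual_nx_eq_some_iff hi).1 (hsteps i i.lt_succ_self)
    exact fun hmem => hl (Or.inr ⟨_, hmem, hnx⟩)

lemma IsPlay.residual_or_leads {π : ℕ → G.S × G.A} (hπ : G.IsPlay π)
    (h0 : (π 0).1 ∉ G.attractor pl d) :
    ((G.residual pl d).IsPlay π ∧ ∀ i, (π i).1 ∉ G.attractor pl d) ∨
      ∃ i, (π i).1 ∉ G.attractor pl d ∧ G.Leads d (G.attractor pl d) (π i).1 (π i).2 := by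
  by_cases hres : (G.residual pl d).IsPlay π
  · exact Or.inl ⟨hres, fun i => not_mem_of_residual_steps h0 fun j _ => hres j⟩
  · have hex : ∃ i, ¬(G.residual pl d).nx (π i).1 (π i).2 = some (π (i + 1)).1 := by
      exact not_forall.1 hres
    have hi := not_mem_of_residual_steps h0 fun j hj => not_not.1 (Nat.find_min hex hj)
    refine Or.inr ⟨_, hi, by_contra fun hl => Nat.find_spec hex ?_⟩
    exact (residual_nx_eq_some_iff hi).2 ⟨hπ _, hl⟩

section Extension

variable {f' : Bool → G.S → G.A} {v' : G.S → ℤ}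

lemma gain_le_of_follows_attrStrategy (hd : gain pl (colorRank d) = d) (hb : G.ColorsLE d)
    (h' : (G.residual pl d).IsPositionalEquilibrium f' v') (hv' : ∀ s, |v' s| ≤ d)
    {π : ℕ → G.S × G.A} (hπ : G.IsPlay π)
    (hf : G.Follows π pl fun u => if u ∈ G.attractor pl d then G.attrStrategy pl d u else f' pl u) :
    gain pl (if (π 0).1 ∈ G.attractor pl d then colorRank d else v' (π 0).1) ≤
      gain pl (G.payoff π) := by
  have hwin {i : ℕ} (hi : (π i).1 ∈ G.attractor pl d) : G.payoff π = colorRank d :=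
    payoff_eq_of_mem_attractor hb hπ hf (fun u hu => if_pos hu) hi
  have hv'_le : gain pl (v' (π 0).1) ≤ gain pl (colorRank d) :=
    hd ▸ (gain_le_abs _ _).trans (hv' _)
  split_ifs with h0
  · rw [hwin h0]
  · rcases hπ.residual_or_leads h0 with ⟨hres, hout⟩ | ⟨i, -, hl | ⟨t, ht, hnx⟩⟩
    · rw [← residual_payoff_eq hout]
      exact h'.2 pl π hres fun i ho => (hf i ho).trans (if_neg (hout i))
    · rwa [payoff_eq_of_cl_eq hb hπ hl]
    · have h1 : (π (i + 1)).1 = t := Option.some_injective _ ((hπ i).symm.trans hnx)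
      rwa [hwin (h1 ▸ ht)]

lemma gain_le_of_follows_residual {q : Bool} (hq : q ≠ pl) (hd : gain pl (colorRank d) = d)
    (hb : G.ColorsLE d) (h' : (G.residual pl d).IsPositionalEquilibrium f' v')
    {π : ℕ → G.S × G.A} (hπ : G.IsPlay π) (hf : G.Follows π q (f' q)) :
    gain q (if (π 0).1 ∈ G.attractor pl d then colorRank d else v' (π 0).1) ≤
      gain q (G.payoff π) := by
  split_ifs with h0
  · rw [gain_of_ne hq, gain_of_ne hq, neg_le_neg_iff, hd]
    exact (gain_le_abs _ _).trans (abs_payoff_le hb hπ)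
  · rcases hπ.residual_or_leads h0 with ⟨hres, hout⟩ | ⟨i, hi, hl⟩
    · rw [← residual_payoff_eq hout]
      exact h'.2 q π hres hf
    · exfalso
      by_cases ho : G.own (π i).1 = pl
      · exact not_leads_of_not_mem_attractor hi ho (hπ.isSome i) hl
      · have hoq : G.own (π i).1 = q := by
          cases h : G.own (π i).1 <;> cases q <;> cases pl <;> simp_all
        obtain ⟨t, ht⟩ := Option.isSome_iff_exists.1 (h'.1 q (π i).1)
        exact ((residual_nx_eq_some_iff hi).1 ht).2 (hf i hoq ▸ hl)

theorem IsPositionalEquilibrium.of_residual (hd : gain pl (colorRank d) = d)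
    (hb : G.ColorsLE d) (h' : (G.residual pl d).IsPositionalEquilibrium f' v')
    (hv' : ∀ s, |v' s| ≤ d) :
    G.IsPositionalEquilibrium
      (fun q u => if q = pl ∧ u ∈ G.attractor pl d then G.attrStrategy pl d u else f' q u)
      (fun u => if u ∈ G.attractor pl d then colorRank d else v' u) := by
  refine ⟨fun q u => ?_, fun q π hπ hf => ?_⟩
  · dsimp only
    split_ifs
    · exact attrStrategy_isSome u
    · obtain ⟨t, ht⟩ := Option.isSome_iff_exists.1 (h'.1 q u)
      rw [nx_eq_some_of_residual ht]
      rfl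
  · by_cases hq : q = pl
    · subst hq
      exact gain_le_of_follows_attrStrategy hd hb h' hv' hπ (by simpa using hf)
    · exact gain_le_of_follows_residual hq hd hb h' hπ (by simpa [hq] using hf)

end Extension

theorem exists_isPositionalEquilibrium_of_colorsLE (n : ℕ) :
    ∀ G : DetGame, G.ColorsLE n → ∃ f v, G.IsPositionalEquilibrium f v ∧ ∀ s, |v s| ≤ n := by
  induction n with
  | zero =>
    intro G hb
    refine ⟨fun _ => G.dflt, fun _ => 0, ⟨fun _ => G.dflt_isSome, fun pl π hπ _ => ?_⟩, by simp⟩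
    simp [abs_nonpos_iff.1 (abs_payoff_le hb hπ)]
  | succ n ih =>
    intro G hb
    obtain ⟨f', v', h', hv'⟩ := ih _ (colorsLE_residual (pl := decide (Even (n + 1))) hb)
    have hv'_le (s : G.S) : |v' s| ≤ ((n + 1 : ℕ) : ℤ) := (hv' s).trans (by push_cast; omega)
    refine ⟨_, _, h'.of_residual (gain_colorRank _) hb hv'_le, fun s => ?_⟩
    split_ifs
    · rw [abs_colorRank]
    · exact hv'_le s

theorem exists_isPositionalEquilibrium (G : DetGame) : ∃ f v, G.IsPositionalEquilibrium f v := by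
  obtain ⟨n, hn⟩ := (Set.finite_range fun p : G.S × G.A => G.cl p.1 p.2).bddAbove
  obtain ⟨f, v, h, -⟩ :=
    exists_isPositionalEquilibrium_of_colorsLE n G fun s a _ => hn ⟨(s, a), rfl⟩
  exact ⟨f, v, h⟩

end DetGame

end DeterministicGames

section PositionalStrategies

variable {C : Type*} {Ar : Arena C}

noncomputable def Strategy.ofPositional (g : Ar.S → Ar.A) : Strategy Ar :=
  fun ρ => PMF.pure (g ρ.out)

variable {g : Ar.S → Ar.A} {I : Set Ar.S} {pl : Bool}

lemma Strategy.pureFor_ofPositional : (Strategy.ofPositional g).PureFor I pl :=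
  fun _ _ => ⟨_, rfl⟩

lemma Strategy.memlessFor_ofPositional : (Strategy.ofPositional g).MemlessFor I pl :=
  fun _ _ _ _ h => congrArg (fun u => PMF.pure (g u)) h

lemma Strategy.mem_P_ofPositional (hg : ∀ s, Ar.avail s (g s)) :
    StratType.P.Mem (Strategy.ofPositional g) I pl :=
  ⟨fun _ _ _ ha => (PMF.mem_support_pure_iff _ _).1 ((PMF.mem_support_iff _ _).2 ha) ▸ hg _,
    Strategy.pureFor_ofPositional⟩

lemma Strategy.shift_ofPositional (ρ : Hist Ar) :
    (Strategy.ofPositional g).shift ρ = Strategy.ofPositional g := by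
  funext ρ'
  unfold Strategy.shift
  split_ifs with h
  · simp [Strategy.ofPositional, Hist.out_append ρ ρ' h]
  · rfl

end PositionalStrategies

section Optimality

variable {C : Type*} {le : Measure (ColSeq C) → Measure (ColSeq C) → Prop} {Ar : Arena C}
  {I : Set Ar.S} {Xt : StratType} {σ1 σ2 : Strategy Ar}

theorem optimalFor1_of_isNE (htrans : ∀ μ ν ξ, le μ ν → le ν ξ → le μ ξ)
    (hmem : Xt.Mem σ1 I true) (hNE : ∀ s ∈ I, IsNE' le Ar {s} Xt σ1 σ2) :
    OptimalFor1 le Ar I Xt σ1 := by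
  refine ⟨hmem, fun s hs σ1' h1' μ ⟨hμ, σ2', h2', hle⟩ => ⟨hμ, σ2, (hNE s hs).2.1, ?_⟩⟩
  obtain ⟨hdev1, hdev2⟩ := (hNE s hs).2.2 s rfl
  exact htrans _ _ _ (hdev1 σ1' (h1'.mono (Set.singleton_subset_iff.2 hs)))
    (htrans _ _ _ (hdev2 σ2' h2') hle)

theorem optimalFor2_of_isNE (htrans : ∀ μ ν ξ, le μ ν → le ν ξ → le μ ξ)
    (hmem : Xt.Mem σ2 I false) (hNE : ∀ s ∈ I, IsNE' le Ar {s} Xt σ1 σ2) :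
    OptimalFor2 le Ar I Xt σ2 := by
  refine ⟨hmem, fun s hs σ2' h2' μ ⟨hμ, σ1', h1', hle⟩ => ⟨hμ, σ1, (hNE s hs).1, ?_⟩⟩
  obtain ⟨hdev1, hdev2⟩ := (hNE s hs).2.2 s rfl
  exact htrans _ _ _ (htrans _ _ _ hle (hdev1 σ1' h1'))
    (hdev2 σ2' (h2'.mono (Set.singleton_subset_iff.2 hs)))

end Optimality

section DeterministicArenas

lemma pmf_pure_injective {α : Type*} : Function.Injective (PMF.pure : α → PMF α) := by
  intro a b h
  by_contra hne
  simpa [PMF.pure_apply, hne] using congrArg (fun p : PMF α => p a) h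

variable {C : Type*} {Ar : Arena C}

noncomputable def Arena.detSucc (Ar : Arena C) (s : Ar.S) (a : Ar.A) : Option Ar.S :=
  (Ar.tr s a).map fun p => @Classical.epsilon _ ⟨s⟩ fun t => p = PMF.pure t

lemma Arena.detSucc_eq_of_tr {s t : Ar.S} {a : Ar.A} (h : Ar.tr s a = some (PMF.pure t)) :
    Ar.detSucc s a = some t := by
  simp only [Arena.detSucc, h, Option.map_some, Option.some.injEq]
  exact (pmf_pure_injective
    (Classical.epsilon_spec (p := fun t' => PMF.pure t = PMF.pure t') ⟨t, rfl⟩)).symm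

def Play.pairs (p : Play Ar) : ℕ → Ar.S × Ar.A := fun i => (p.st i, p.ac i)

end DeterministicArenas

section WeakParityArenas

noncomputable def Arena.toDetGame (Ar : Arena ℕ) : DetGame where
  S := Ar.S
  A := Ar.A
  own := Ar.owner
  nx := Ar.detSucc
  cl := Ar.col
  nonblock s := (Ar.nonblocking s).imp fun a ha => by simpa [Arena.detSucc] using ha

variable {Ar : Arena ℕ} {σ1 σ2 σ1' σ2' : Strategy Ar} {s : Ar.S}

lemma Arena.toDetGame_isSome_iff {a : Ar.A} :
    (Ar.toDetGame.nx s a).isSome ↔ Ar.avail s a := by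
  simp [Arena.toDetGame, Arena.detSucc, Arena.avail]

lemma Arena.toDetGame_payoff (p : Play Ar) :
    Ar.toDetGame.payoff p.pairs = colorRank (⨆ i, colsω p i) :=
  rfl

lemma isPlay_inducedPlay (hdet : Ar.IsDeterministic) (h : IsPureProfile σ1 σ2 s) :
    Ar.toDetGame.IsPlay (inducedPlay σ1 σ2 s).pairs := fun i => by
  have hspec := nextStep_spec hdet h (inducedHist_valid hdet h i) (inducedHist_first ..)
  change Ar.detSucc _ _ = some (Hist.out (Hist.extend _ _))
  rw [Hist.out_extend]
  exact Arena.detSucc_eq_of_tr hspec.2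

lemma follows_inducedPlay (hdet : Ar.IsDeterministic) (h : IsPureProfile σ1 σ2 s) {pl : Bool}
    {g : Ar.S → Ar.A}
    (hg : ∀ ρ : Hist Ar, Ar.owner ρ.out = pl → activeMove σ1 σ2 ρ = PMF.pure (g ρ.out)) :
    Ar.toDetGame.Follows (inducedPlay σ1 σ2 s).pairs pl g := fun i ho =>
  pmf_pure_injective ((nextStep_spec hdet h (inducedHist_valid hdet h i)
    (inducedHist_first ..)).1.symm.trans (hg _ ho))

lemma shiftLE_Pc_of_payoff_le (hdet : Ar.IsDeterministic) (h : IsPureProfile σ1 σ2 s)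
    (h' : IsPureProfile σ1' σ2' s)
    (hle : Ar.toDetGame.payoff (inducedPlay σ1' σ2' s).pairs ≤
      Ar.toDetGame.payoff (inducedPlay σ1 σ2 s).pairs) (u : List ℕ) :
    shiftLE prefWP u (Pc Ar σ1' σ2' s) (Pc Ar σ1 σ2 s) := by
  have hbdd (p : Play Ar) : BddAbove (Set.range (colsω p)) :=
    ((Set.finite_range fun q : Ar.S × Ar.A => Ar.col q.1 q.2).subset
      (Set.range_subset_iff.2 fun i => ⟨(p.st i, p.ac i), rfl⟩)).bddAbove
  rw [Arena.toDetGame_payoff, Arena.toDetGame_payoff] at hle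
  change shiftMeasure u _ Wwp ≤ shiftMeasure u _ Wwp
  rw [Pc_eq_dirac hdet h, Pc_eq_dirac hdet h', shiftMeasure_dirac, shiftMeasure_dirac,
    Measure.dirac_apply' _ measurableSet_Wwp, Measure.dirac_apply' _ measurableSet_Wwp]
  by_cases hw : prependWord u (colsω (inducedPlay σ1' σ2' s)) ∈ Wwp
  · rw [Set.indicator_of_mem hw,
      Set.indicator_of_mem (prependWord_mem_Wwp_of_colorRank_le (hbdd _) (hbdd _) hle u hw)]
    exact le_rfl
  · simp [Set.indicator_of_notMem hw]

theorem isNE_ofPositional (hdet : Ar.IsDeterministic) {f : Bool → Ar.S → Ar.A} {v : Ar.S → ℤ}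
    (hf : Ar.toDetGame.IsPositionalEquilibrium f v) (u : List ℕ) (s : Ar.S) :
    IsNE' (shiftLE prefWP u) Ar {s} StratType.P
      (Strategy.ofPositional (f true)) (Strategy.ofPositional (f false)) := by
  have hmem (pl : Bool) : StratType.P.Mem (Strategy.ofPositional (f pl)) {s} pl :=
    Strategy.mem_P_ofPositional fun t => Arena.toDetGame_isSome_iff.1 (hf.1 pl t)
  have hval {σ1 σ2 : Strategy Ar} (h : IsPureProfile σ1 σ2 s) (pl : Bool)
      (hpl : ∀ ρ : Hist Ar, Ar.owner ρ.out = pl → activeMove σ1 σ2 ρ = PMF.pure (f pl ρ.out)) :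
      gain pl (v s) ≤ gain pl (Ar.toDetGame.payoff (inducedPlay σ1 σ2 s).pairs) :=
    hf.2 pl _ (isPlay_inducedPlay hdet h) (follows_inducedPlay hdet h hpl)
  have hpos1 (σ2 : Strategy Ar) (ρ : Hist Ar) (ho : Ar.owner ρ.out = true) :
      activeMove (Strategy.ofPositional (f true)) σ2 ρ = PMF.pure (f true ρ.out) := if_pos ho
  have hpos2 (σ1 : Strategy Ar) (ρ : Hist Ar) (ho : Ar.owner ρ.out = false) :
      activeMove σ1 (Strategy.ofPositional (f false)) ρ = PMF.pure (f false ρ.out) := by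
    simp [activeMove, ho, Strategy.ofPositional]
  have h0 : IsPureProfile (Strategy.ofPositional (f true)) (Strategy.ofPositional (f false)) s :=
    ⟨hmem true, hmem false⟩
  have hv1 := hval h0 true (hpos1 _)
  have hv2 := hval h0 false (hpos2 _)
  refine ⟨hmem true, hmem false, fun s' hs' => ?_⟩
  obtain rfl := Set.mem_singleton_iff.1 hs'
  refine ⟨fun σ1' h1' => shiftLE_Pc_of_payoff_le hdet h0 ⟨h1', hmem false⟩ ?_ u,
    fun σ2' h2' => shiftLE_Pc_of_payoff_le hdet ⟨hmem true, h2'⟩ h0 ?_ u⟩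
  · have := hval ⟨h1', hmem false⟩ false (hpos2 _)
    simp only [gain_true, gain_false] at this hv1
    omega
  · have := hval ⟨hmem true, h2'⟩ true (hpos1 _)
    simp only [gain_true, gain_false] at this hv2
    omega

theorem Arena.exists_isNE_ofPositional (hdet : Ar.IsDeterministic) :
    ∃ f : Bool → Ar.S → Ar.A, (∀ pl s, Ar.avail s (f pl s)) ∧
      ∀ u s, IsNE' (shiftLE prefWP u) Ar {s} StratType.P
        (Strategy.ofPositional (f true)) (Strategy.ofPositional (f false)) := by
  obtain ⟨f, v, hf⟩ := Ar.toDetGame.exists_isPositionalEquilibrium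
  exact ⟨f, fun pl s => Arena.toDetGame_isSome_iff.1 (hf.1 pl s), isNE_ofPositional hdet hf⟩

end WeakParityArenas

/-- **Weak parity in deterministic games.** Every initialized two-player deterministic
arena admits a pure memoryless `P`-subgame perfect equilibrium for the preference
relation induced by the weak parity winning condition; in particular, both players have
pure memoryless `P`-optimal strategies in every initialized two-player deterministic
arena. -/
theorem weak_parity_deterministic (X : InitArena ℕ) (hdet : X.Ar.IsDeterministic) :
    ∃ σ1 σ2 : Strategy X.Ar,
      σ1.PureFor X.I true ∧ σ1.MemlessFor X.I true ∧
      σ2.PureFor X.I false ∧ σ2.MemlessFor X.I false ∧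
      IsSPE prefWP X.Ar X.I StratType.P σ1 σ2 ∧
      OptimalFor1 prefWP.le X.Ar X.I StratType.P σ1 ∧
      OptimalFor2 prefWP.le X.Ar X.I StratType.P σ2 := by
  obtain ⟨f, hf, hNE⟩ := X.Ar.exists_isNE_ofPositional hdet
  have hNE₀ (s : X.Ar.S) (_ : s ∈ X.I) := shiftLE_nil prefWP ▸ hNE [] s
  have htrans : ∀ μ ν ξ, prefWP.le μ ν → prefWP.le ν ξ → prefWP.le μ ξ := fun _ _ _ => le_trans
  refine ⟨_, _, Strategy.pureFor_ofPositional, Strategy.memlessFor_ofPositional,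
    Strategy.pureFor_ofPositional, Strategy.memlessFor_ofPositional, fun ρ _ => ?_,
    optimalFor1_of_isNE htrans (Strategy.mem_P_ofPositional (hf true)) hNE₀,
    optimalFor2_of_isNE htrans (Strategy.mem_P_ofPositional (hf false)) hNE₀⟩
  rw [Strategy.shift_ofPositional, Strategy.shift_ofPositional]
  exact hNE ρ.cols ρ.out

end StochGames
end
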